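/- arXiv:1304.5667 — 9 statements merged into one kernel-verified Lean document; each statement's English description precedes it below -/
import Mathlib

section
/- Let w ∈ S_n be a permutation that contains no factor (consecutive subsequence of three letters) whose order pattern is 132 or 231. If the last letter of w is smaller than the second-to-last letter, then w is the decreasing permutation n(n-1)...1. -/
/-- A pattern of length 3, given as a relation on the three letter values. -/
abbrev Pat : Type := ℕ → ℕ → ℕ → Prop

def p123 : Pat := fun a b c => a < b ∧ b < c
def p132 : Pat := fun a b c => a < c ∧ c < b
def p213 : Pat := fun a b c => b < a ∧ a < c
def p231 : Pat := fun a b c => c < a ∧ a < b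
def p312 : Pat := fun a b c => b < c ∧ c < a
def p321 : Pat := fun a b c => c < b ∧ b < a

/-- The factor of `w` at positions `i, i+1, i+2` has order pattern `p`. -/
def PatAt {n : ℕ} (w : Equiv.Perm (Fin n)) (i : ℕ) (h : i + 3 ≤ n) (p : Pat) : Prop :=
  p (w ⟨i, by omega⟩).val (w ⟨i + 1, by omega⟩).val (w ⟨i + 2, by omega⟩).val

/-- One replacement move: a factor of three adjacent letters whose pattern lies in some
part `Q` of the replacement partition is rearranged (same letters, all other positions
unchanged) into a factor whose pattern also lies in `Q`. -/
def Step3 {n : ℕ} (parts : Set (Set Pat)) (w w' : Equiv.Perm (Fin n)) : Prop :=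
  ∃ Q ∈ parts, ∃ i : ℕ, ∃ h : i + 3 ≤ n,
    (∀ j : Fin n, (j.val < i ∨ i + 3 ≤ j.val) → w j = w' j) ∧
    (∃ p ∈ Q, PatAt w i h p) ∧ (∃ q ∈ Q, PatAt w' i h q)

/-- The equivalence relation on `S_n` generated by the replacement moves. -/
def PattEquiv {n : ℕ} (parts : Set (Set Pat)) :
    Equiv.Perm (Fin n) → Equiv.Perm (Fin n) → Prop :=
  Relation.EqvGen (Step3 parts)

/-- The number of equivalence classes of `S_n` under the given replacement partition. -/
noncomputable def classCount (n : ℕ) (parts : Set (Set Pat)) : ℕ :=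
  Nat.card (Quotient (Setoid.mk (PattEquiv (n := n) parts)
    (Relation.EqvGen.is_equivalence _)))

/-- `w` avoids every pattern in `P` as a consecutive pattern. -/
def AvoidsAll {n : ℕ} (w : Equiv.Perm (Fin n)) (P : Set Pat) : Prop :=
  ∀ (i : ℕ) (h : i + 3 ≤ n), ∀ p ∈ P, ¬ PatAt w i h p

/-- A V-permutation: the letters strictly decrease until the letter `1`
(the smallest value, `0` in `Fin n`) and then strictly increase. -/
def IsVPerm {n : ℕ} (w : Equiv.Perm (Fin n)) : Prop :=
  ∃ i : Fin n, w i = ⟨0, i.pos⟩ ∧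
    (∀ j k : Fin n, j < k → k ≤ i → w k < w j) ∧
    (∀ j k : Fin n, i ≤ j → j < k → w j < w k)

/-- Motzkin path: steps U=1, F=0, D=-1, partial sums nonnegative, total sum 0. -/
def IsMotzkinPath (l : List ℤ) : Prop :=
  (∀ x ∈ l, x = 1 ∨ x = 0 ∨ x = -1) ∧ (∀ k : ℕ, 0 ≤ (l.take k).sum) ∧ l.sum = 0

/-- The `n`-th Motzkin number: the number of Motzkin paths of length `n`. -/
noncomputable def motzkin (n : ℕ) : ℕ :=
  Nat.card {l : List ℤ // l.length = n ∧ IsMotzkinPath l}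


/-!
Reading `w` from right to left, a descent `w (i+1) > w (i+2)` forces the descent
`w i > w (i+1)`: otherwise the factor at `i` would be `132` or `231`, according to whether
`w i` lies below or above `w (i+2)`. So the final descent propagates to the whole word,
and the only strictly decreasing permutation of `Fin n` is `Fin.rev`.
-/

theorem Fin.strictAnti_of_succ_lt {α : Type*} [Preorder α] {n : ℕ} {f : Fin n → α}
    (h : ∀ (i : ℕ) (hi : i + 1 < n), f ⟨i + 1, hi⟩ < f ⟨i, by omega⟩) : StrictAnti f := by
  cases n with
  | zero => exact fun i => i.elim0
  | succ m => exact Fin.strictAnti_iff_succ_lt.2 fun i => h i (by omega)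

theorem Equiv.Perm.eq_rev_of_strictAnti {n : ℕ} {w : Equiv.Perm (Fin n)}
    (hw : StrictAnti w) : ⇑w = Fin.rev :=
  (hw.range_inj Fin.rev_strictAnti).1 <| by
    rw [w.range_eq_univ, Fin.rev_surjective.range_eq]

theorem lt_of_not_p132_of_not_p231 {a b c : ℕ} (hab : a ≠ b) (hac : a ≠ c)
    (h132 : ¬ p132 a b c) (h231 : ¬ p231 a b c) (hcb : c < b) : b < a := by
  unfold p132 p231 at *
  omega

namespace AvoidsAll

variable {n : ℕ} {w : Equiv.Perm (Fin n)}

theorem lt_of_succ_lt (hav : AvoidsAll w {p132, p231}) (i : ℕ) (h : i + 3 ≤ n)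
    (hdesc : w ⟨i + 2, by omega⟩ < w ⟨i + 1, by omega⟩) :
    w ⟨i + 1, by omega⟩ < w ⟨i, by omega⟩ :=
  lt_of_not_p132_of_not_p231
    (Fin.val_injective.ne (w.injective.ne (by simp)))
    (Fin.val_injective.ne (w.injective.ne (by simp)))
    (hav i h p132 (by simp)) (hav i h p231 (by simp)) hdesc

theorem succ_lt_of_le (hav : AvoidsAll w {p132, p231}) {i j : ℕ} (hij : i ≤ j)
    (hj : j + 1 < n) (hdesc : w ⟨j + 1, hj⟩ < w ⟨j, by omega⟩) :
    w ⟨i + 1, by omega⟩ < w ⟨i, by omega⟩ := by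
  induction hk : j - i generalizing i with
  | zero =>
    obtain rfl : i = j := by omega
    exact hdesc
  | succ k ih =>
    exact hav.lt_of_succ_lt i (by omega) (ih (i := i + 1) (by omega) (by omega) (by omega))

end AvoidsAll

/-- a permutation avoiding the consecutive patterns 132 and 231 whose last
letter is smaller than its second-to-last letter is the decreasing permutation. -/
theorem stmt1 (n : ℕ) (hn : 2 ≤ n) (w : Equiv.Perm (Fin n))
    (hav : AvoidsAll w {p132, p231})
    (hlast : w ⟨n - 1, by omega⟩ < w ⟨n - 2, by omega⟩) :
    ∀ j : Fin n, (w j).val = n - 1 - j.val := by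
  have hrev : ⇑w = Fin.rev := Equiv.Perm.eq_rev_of_strictAnti <|
    Fin.strictAnti_of_succ_lt fun i _ =>
      hav.succ_lt_of_le (j := n - 2) (by omega) (by omega) (by convert hlast using 3; omega)
  intro j
  rw [hrev, Fin.val_rev]
  omega
end

section
/- For n > 3, the number g(n) of permutations in S_n avoiding the consecutive patterns 213, 132, and 231 satisfies g(n) = 2·g(n-1) - 1. Consequently, since g(3) = 3, we have g(n) = 2^(n-2) + 1 for all n ≥ 3. -/
/-! Avoiding `213`, `132` and `231` consecutively means that every factor of three letters is
increasing or starts with its largest letter. So the largest letter of such a permutation is its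
first or its last letter. Removing it from the front leaves an arbitrary such permutation of size
`n - 1`; removing it from the end leaves one whose last two letters ascend. Since an ascent forces
every later step to ascend, the only such permutation ending in a descent is the decreasing one,
whence `g n = g (n - 1) + (g (n - 1) - 1)`. -/

namespace ConsecutiveAvoidance

open Equiv

variable {n : ℕ}

def avoiders (n : ℕ) : Set (Perm (Fin n)) := {w | AvoidsAll w {p213, p132, p231}}

def valSeq (w : Perm (Fin n)) (i : ℕ) : ℕ := if h : i < n then w ⟨i, h⟩ else 0

lemma valSeq_of_lt (w : Perm (Fin n)) {i : ℕ} (h : i < n) : valSeq w i = w ⟨i, h⟩ :=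
  dif_pos h

lemma valSeq_lt (w : Perm (Fin n)) {i : ℕ} (h : i < n) : valSeq w i < n := by
  simp [valSeq_of_lt w h]

lemma valSeq_ne (w : Perm (Fin n)) {i j : ℕ} (hi : i < n) (hj : j < n) (hij : i ≠ j) :
    valSeq w i ≠ valSeq w j := by
  simp [valSeq_of_lt w hi, valSeq_of_lt w hj, Fin.val_inj, hij]

/-- The patterns `123`, `312`, `321`: for distinct letters, exactly those outside
`{213, 132, 231}`. -/
def IncOrFirstMax (a b c : ℕ) : Prop := a < b ∧ b < c ∨ b < a ∧ c < a

lemma mem_avoiders_iff (w : Perm (Fin n)) : w ∈ avoiders n ↔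
    ∀ i, i + 3 ≤ n → IncOrFirstMax (valSeq w i) (valSeq w (i + 1)) (valSeq w (i + 2)) := by
  have patAt_iff (i : ℕ) (h : i + 3 ≤ n) (p : Pat) :
      PatAt w i h p ↔ p (valSeq w i) (valSeq w (i + 1)) (valSeq w (i + 2)) := by
    rw [valSeq_of_lt w (by omega), valSeq_of_lt w (by omega), valSeq_of_lt w (by omega)]
    rfl
  simp only [avoiders, AvoidsAll, Set.mem_ofPred_eq, Set.mem_insert_iff,
    Set.mem_singleton_iff, forall_eq_or_imp, forall_eq, patAt_iff]
  refine forall₂_congr fun i h => ?_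
  have h01 := valSeq_ne w (i := i) (j := i + 1) (by omega) (by omega) (by omega)
  have h12 := valSeq_ne w (i := i + 1) (j := i + 2) (by omega) (by omega) (by omega)
  have h02 := valSeq_ne w (i := i) (j := i + 2) (by omega) (by omega) (by omega)
  simp only [p213, p132, p231, IncOrFirstMax]
  omega

lemma symm_last_eq_zero_or_last {w : Perm (Fin (n + 1))} (hw : w ∈ avoiders (n + 1)) :
    w.symm (Fin.last n) = 0 ∨ w.symm (Fin.last n) = Fin.last n := by
  set j := w.symm (Fin.last n)
  have hmax : valSeq w j = n := by simp [valSeq_of_lt w j.isLt, j]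
  by_contra hj
  have hj0 : j.val ≠ 0 := fun h => hj (Or.inl (Fin.ext h))
  have hjn : j.val ≠ n := fun h => hj (Or.inr (Fin.ext h))
  have hj' := j.isLt
  have htriple := (mem_avoiders_iff w).1 hw (j - 1) (by omega)
  rw [show j.val - 1 + 1 = j by omega, show j.val - 1 + 2 = j + 1 by omega, hmax] at htriple
  have hl := valSeq_lt w (i := j - 1) (by omega)
  have hr := valSeq_lt w (i := j + 1) (by omega)
  have hl' := valSeq_ne w (i := j - 1) (j := j) (by omega) (by omega) (by omega)
  have hr' := valSeq_ne w (i := j + 1) (j := j) (by omega) (by omega) (by omega)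
  simp only [IncOrFirstMax] at htriple
  omega

lemma valSeq_lt_valSeq_succ_of_le {w : Perm (Fin n)} (hw : w ∈ avoiders n) {i j : ℕ}
    (hi : valSeq w i < valSeq w (i + 1)) (hij : i ≤ j) (hj : j + 2 ≤ n) :
    valSeq w j < valSeq w (j + 1) := by
  induction j, hij using Nat.le_induction with
  | base => exact hi
  | succ j _ ih =>
    have htriple := (mem_avoiders_iff w).1 hw j (by omega)
    simp only [IncOrFirstMax] at htriple
    have := ih (by omega)
    rw [show j + 1 + 1 = j + 2 by omega]
    omega

lemma eq_revPerm_of_valSeq_lt {w : Perm (Fin n)} (hw : w ∈ avoiders n) (hn : 2 ≤ n)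
    (hdesc : valSeq w (n - 1) < valSeq w (n - 2)) : w = Fin.revPerm := by
  obtain ⟨m, rfl⟩ : ∃ m, n = m + 1 := ⟨n - 1, by omega⟩
  have hanti : StrictAnti w := by
    refine Fin.strictAnti_iff_succ_lt.2 fun i => ?_
    have hne := valSeq_ne w (i := i) (j := i + 1) (by omega) (by omega) (by omega)
    by_contra! hasc
    have := valSeq_lt_valSeq_succ_of_le hw (i := i) (j := m - 1) ?_ (by omega) (by omega)
    · rw [show m - 1 + 1 = m + 1 - 1 by omega, show m - 1 = m + 1 - 2 by omega] at this
      omega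
    · rw [valSeq_of_lt w (by omega), valSeq_of_lt w (by omega)]
      exact lt_of_le_of_ne (Fin.le_iff_val_le_val.1 hasc) (by simpa [valSeq_of_lt] using hne)
  have hid := (Fin.rev_strictAnti.comp hanti).eq_id
  ext a
  have := congrArg Fin.val (congrFun hid a)
  simp only [Function.comp_apply, Fin.val_rev, id_eq] at this
  simp only [Fin.revPerm_apply, Fin.val_rev]
  omega

lemma valSeq_revPerm {i : ℕ} (hi : i < n) : valSeq (Fin.revPerm : Perm (Fin n)) i = n - 1 - i := by
  simp [valSeq_of_lt _ hi]
  omega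

lemma revPerm_mem_avoiders : (Fin.revPerm : Perm (Fin n)) ∈ avoiders n := by
  refine (mem_avoiders_iff _).2 fun i hi => ?_
  rw [valSeq_revPerm (by omega), valSeq_revPerm (by omega), valSeq_revPerm (by omega)]
  simp only [IncOrFirstMax]
  omega

def appendMax (u : Perm (Fin n)) : Perm (Fin (n + 1)) :=
  finSuccEquivLast.symm.permCongr u.optionCongr

def prependMax (u : Perm (Fin n)) : Perm (Fin (n + 1)) :=
  appendMax u * (finRotate (n + 1)).symm

@[simp] lemma appendMax_castSucc (u : Perm (Fin n)) (i : Fin n) :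
    appendMax u i.castSucc = (u i).castSucc := by
  simp [appendMax, finSuccEquivLast_castSucc, finSuccEquivLast_symm_some]

@[simp] lemma appendMax_last (u : Perm (Fin n)) : appendMax u (Fin.last n) = Fin.last n := by
  simp [appendMax, finSuccEquivLast_last]

@[simp] lemma prependMax_zero (u : Perm (Fin n)) : prependMax u 0 = Fin.last n := by
  have : (finRotate (n + 1)).symm 0 = Fin.last n := (symm_apply_eq _).2 finRotate_last.symm
  simp [prependMax, this]

@[simp] lemma prependMax_succ (u : Perm (Fin n)) (i : Fin n) :
    prependMax u i.succ = (u i).castSucc := by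
  have : (finRotate (n + 1)).symm i.succ = i.castSucc := by
    rw [Equiv.symm_apply_eq]
    exact Fin.ext (by simp)
  simp [prependMax, this]

lemma appendMax_injective : Function.Injective (appendMax (n := n)) :=
  fun _ _ h => optionCongr_injective ((Equiv.permCongr _).injective h)

lemma prependMax_injective : Function.Injective (prependMax (n := n)) :=
  (mul_left_injective _).comp appendMax_injective

lemma exists_appendMax_eq {w : Perm (Fin (n + 1))} (hw : w (Fin.last n) = Fin.last n) :
    ∃ u, appendMax u = w := by
  set σ := finSuccEquivLast.permCongr w
  have hσ : σ none = none := by simp [σ, hw, finSuccEquivLast_last]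
  refine ⟨removeNone σ, ?_⟩
  rw [appendMax, map_equiv_removeNone, hσ, swap_self, ← Perm.one_def, one_mul, ← permCongr_symm,
    symm_apply_apply]

lemma exists_prependMax_eq {w : Perm (Fin (n + 1))} (hw : w 0 = Fin.last n) :
    ∃ u, prependMax u = w := by
  obtain ⟨u, hu⟩ := exists_appendMax_eq (w := w * finRotate (n + 1)) (by simp [hw])
  exact ⟨u, by rw [prependMax, hu, ← Perm.inv_def, mul_inv_cancel_right]⟩

lemma valSeq_appendMax_of_lt (u : Perm (Fin n)) {i : ℕ} (hi : i < n) :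
    valSeq (appendMax u) i = valSeq u i := by
  rw [valSeq_of_lt _ (by omega), valSeq_of_lt u hi]
  exact congrArg Fin.val (appendMax_castSucc u ⟨i, hi⟩)

lemma valSeq_appendMax_self (u : Perm (Fin n)) : valSeq (appendMax u) n = n := by
  rw [valSeq_of_lt _ (by omega)]
  exact congrArg Fin.val (appendMax_last u)

lemma valSeq_prependMax_zero (u : Perm (Fin n)) : valSeq (prependMax u) 0 = n := by
  rw [valSeq_of_lt _ (by omega)]
  exact congrArg Fin.val (prependMax_zero u)

lemma valSeq_prependMax_succ (u : Perm (Fin n)) (i : ℕ) :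
    valSeq (prependMax u) (i + 1) = valSeq u i := by
  by_cases hi : i < n
  · rw [valSeq_of_lt _ (by omega), valSeq_of_lt u hi]
    exact congrArg Fin.val (prependMax_succ u ⟨i, hi⟩)
  · simp [valSeq, hi]

lemma prependMax_mem_avoiders_iff (u : Perm (Fin n)) :
    prependMax u ∈ avoiders (n + 1) ↔ u ∈ avoiders n := by
  simp only [mem_avoiders_iff]
  constructor
  · intro h i hi
    simpa only [valSeq_prependMax_succ] using h (i + 1) (by omega)
  · rintro h (_ | i) hi
    · rw [valSeq_prependMax_zero, valSeq_prependMax_succ, valSeq_prependMax_succ]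
      have := valSeq_lt u (i := 0) (by omega)
      have := valSeq_lt u (i := 1) (by omega)
      simp only [IncOrFirstMax]
      omega
    · simpa only [valSeq_prependMax_succ] using h i (by omega)

lemma appendMax_mem_avoiders_iff (hn : 2 ≤ n) (u : Perm (Fin n)) :
    appendMax u ∈ avoiders (n + 1) ↔
      u ∈ avoiders n ∧ valSeq u (n - 2) < valSeq u (n - 1) := by
  have hlast : IncOrFirstMax (valSeq (appendMax u) (n - 2)) (valSeq (appendMax u) (n - 2 + 1))
      (valSeq (appendMax u) (n - 2 + 2)) ↔ valSeq u (n - 2) < valSeq u (n - 1) := by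
    rw [show n - 2 + 1 = n - 1 by omega, show n - 2 + 2 = n by omega, valSeq_appendMax_self,
      valSeq_appendMax_of_lt u (by omega), valSeq_appendMax_of_lt u (by omega)]
    have := valSeq_lt u (i := n - 1) (by omega)
    have := valSeq_lt u (i := n - 2) (by omega)
    simp only [IncOrFirstMax]
    omega
  simp only [mem_avoiders_iff]
  constructor
  · intro h
    refine ⟨fun i hi => ?_, hlast.1 (h (n - 2) (by omega))⟩
    simpa only [valSeq_appendMax_of_lt u (show i + 2 < n by omega),
      valSeq_appendMax_of_lt u (show i + 1 < n by omega),
      valSeq_appendMax_of_lt u (show i < n by omega)] using h i (by omega)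
  · rintro ⟨h, hasc⟩ i hi
    rcases (show i + 3 ≤ n ∨ i = n - 2 by omega) with hi | rfl
    · simpa only [valSeq_appendMax_of_lt u (show i + 2 < n by omega),
        valSeq_appendMax_of_lt u (show i + 1 < n by omega),
        valSeq_appendMax_of_lt u (show i < n by omega)] using h i hi
    · exact hlast.2 hasc

lemma valSeq_lt_valSeq_iff_ne_revPerm (hn : 2 ≤ n) {u : Perm (Fin n)} (hu : u ∈ avoiders n) :
    valSeq u (n - 2) < valSeq u (n - 1) ↔ u ≠ Fin.revPerm := by
  constructor
  · rintro hasc rfl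
    rw [valSeq_revPerm (by omega), valSeq_revPerm (by omega)] at hasc
    omega
  · intro hne
    by_contra! hdesc
    have := valSeq_ne u (i := n - 1) (j := n - 2) (by omega) (by omega) (by omega)
    exact hne (eq_revPerm_of_valSeq_lt hu hn (by omega))

lemma avoiders_succ (hn : 2 ≤ n) : avoiders (n + 1) =
    prependMax '' avoiders n ∪ appendMax '' (avoiders n \ {Fin.revPerm}) := by
  ext w
  constructor
  · intro hw
    rcases symm_last_eq_zero_or_last hw with h | h
    · obtain ⟨u, rfl⟩ := exists_prependMax_eq ((symm_apply_eq w).1 h).symm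
      exact Or.inl ⟨u, (prependMax_mem_avoiders_iff u).1 hw, rfl⟩
    · obtain ⟨u, rfl⟩ := exists_appendMax_eq ((symm_apply_eq w).1 h).symm
      obtain ⟨hu, hasc⟩ := (appendMax_mem_avoiders_iff hn u).1 hw
      exact Or.inr ⟨u, ⟨hu, (valSeq_lt_valSeq_iff_ne_revPerm hn hu).1 hasc⟩, rfl⟩
  · rintro (⟨u, hu, rfl⟩ | ⟨u, ⟨hu, hne⟩, rfl⟩)
    · exact (prependMax_mem_avoiders_iff u).2 hu
    · exact (appendMax_mem_avoiders_iff hn u).2 ⟨hu, (valSeq_lt_valSeq_iff_ne_revPerm hn hu).2 hne⟩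

lemma prependMax_ne_appendMax (hn : 0 < n) (u v : Perm (Fin n)) : prependMax u ≠ appendMax v := by
  intro h
  have := valSeq_lt v hn
  rw [← valSeq_appendMax_of_lt v hn, ← h, valSeq_prependMax_zero] at this
  exact lt_irrefl n this

lemma ncard_avoiders_succ (hn : 2 ≤ n) :
    (avoiders (n + 1)).ncard + 1 = 2 * (avoiders n).ncard := by
  have hdisj : Disjoint (prependMax '' avoiders n) (appendMax '' (avoiders n \ {Fin.revPerm})) :=
    Set.disjoint_left.2 fun _ ⟨u, _, hu⟩ ⟨v, _, hv⟩ =>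
      prependMax_ne_appendMax (by omega) u v (hu.trans hv.symm)
  rw [avoiders_succ hn, Set.ncard_union_eq hdisj,
    Set.ncard_image_of_injective _ prependMax_injective,
    Set.ncard_image_of_injective _ appendMax_injective, add_assoc,
    Set.ncard_sdiff_singleton_add_one revPerm_mem_avoiders, two_mul]

lemma ncard_avoiders_two : (avoiders 2).ncard = 2 := by
  have : avoiders 2 = Set.univ := Set.eq_univ_of_forall fun _ i hi => by omega
  rw [this, Set.ncard_univ, Nat.card_perm, Nat.card_fin]
  rfl

end ConsecutiveAvoidance

/-- the number `g n` of permutations in `S_n` avoiding the consecutive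
patterns 213, 132 and 231 satisfies `g n = 2 * g (n-1) - 1` for `n > 3`; since
`g 3 = 3`, we get `g n = 2^(n-2) + 1` for all `n ≥ 3`. -/
theorem stmt2 (g : ℕ → ℕ)
    (hg : ∀ n : ℕ, g n = Nat.card {w : Equiv.Perm (Fin n) // AvoidsAll w {p213, p132, p231}}) :
    (∀ n : ℕ, 3 < n → g n = 2 * g (n - 1) - 1) ∧ g 3 = 3 ∧
      (∀ n : ℕ, 3 ≤ n → g n = 2 ^ (n - 2) + 1) := by
  have hA (n : ℕ) : g n = (ConsecutiveAvoidance.avoiders n).ncard := by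
    rw [hg n, ← Nat.card_coe_set_eq]
    rfl
  have hrec (n : ℕ) (hn : 2 ≤ n) : g (n + 1) + 1 = 2 * g n := by
    rw [hA, hA]
    exact ConsecutiveAvoidance.ncard_avoiders_succ hn
  have hclosed (n : ℕ) (hn : 2 ≤ n) : g n = 2 ^ (n - 2) + 1 := by
    induction n, hn using Nat.le_induction with
    | base => rw [hA, ConsecutiveAvoidance.ncard_avoiders_two]; rfl
    | succ n hn ih =>
      rw [show n + 1 - 2 = n - 2 + 1 by omega, pow_succ]
      have := hrec n hn
      omega
  refine ⟨fun n hn => ?_, hclosed 3 (by omega), fun n hn => hclosed n (by omega)⟩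
  have := hrec (n - 1) (by omega)
  rw [Nat.sub_add_cancel (by omega)] at this
  omega
end

section
/- For every n ≥ 2, M_{n-1} - M_{n-2} = Σ_{k=1}^{⌊(n-1)/2⌋} C(n-2, 2k-1) · Cat_k, where M_j denotes the j-th Motzkin number and Cat_k the k-th Catalan number. -/
/-!
The non-flat steps of a Motzkin path of length `m` sit at `2k` of its `m` positions and, read in
order, spell a Dyck word of semilength `k`; conversely any choice of positions and Dyck word gives a
Motzkin path, since inserting flat steps does not change the set of heights visited. Hence
`M_m = ∑ₖ C(m, 2k) Cat_k`, and Pascal's rule `C(m+1, 2k) = C(m, 2k) + C(m, 2k-1)` gives the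
difference `M_{m+1} - M_m`.
-/

open List

section FilterNe

variable {α : Type*} [DecidableEq α]

theorem List.encard_setOf_length_eq_filter_ne_eq (a : α) (m : ℕ) {d : List α} (hd : a ∉ d) :
    {l : List α | l.length = m ∧ l.filter (· ≠ a) = d}.encard = m.choose d.length := by
  induction m generalizing d with
  | zero =>
    cases d with
    | nil => exact Set.encard_eq_one.2 ⟨[], by ext l; simp +contextual⟩
    | cons x d => simp +contextual [Set.eq_empty_iff_forall_notMem]
  | succ m ih =>
    cases d with
    | nil =>
      have hsplit : {l : List α | l.length = m + 1 ∧ l.filter (· ≠ a) = []} =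
          cons a '' {l | l.length = m ∧ l.filter (· ≠ a) = []} := by
        ext (_ | ⟨y, l⟩) <;> simp; grind
      rw [hsplit, cons_injective.encard_image, ih hd]
      simp
    | cons x d =>
      have hxa : x ≠ a := fun h => hd (h ▸ mem_cons_self)
      have hsplit : {l : List α | l.length = m + 1 ∧ l.filter (· ≠ a) = x :: d} =
          cons a '' {l | l.length = m ∧ l.filter (· ≠ a) = x :: d} ∪
            cons x '' {l | l.length = m ∧ l.filter (· ≠ a) = d} := by
        ext (_ | ⟨y, l⟩)
        · simp
        · by_cases hy : y = a <;> simp [hy] <;> grind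
      have hdisj : _root_.Disjoint (cons a '' {l | l.length = m ∧ l.filter (· ≠ a) = x :: d})
          (cons x '' {l | l.length = m ∧ l.filter (· ≠ a) = d}) := by
        simp only [Set.disjoint_left, Set.mem_image]
        rintro _ ⟨l, -, rfl⟩ ⟨l', -, h⟩
        exact hxa (List.cons_eq_cons.1 h).1
      rw [hsplit, Set.encard_union_eq hdisj, cons_injective.encard_image,
        cons_injective.encard_image, ih hd, ih (fun h => hd (mem_cons_of_mem x h))]
      norm_cast
      rw [length_cons, Nat.choose_succ_succ, add_comm]

end FilterNe

namespace DyckStep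

def toInt : DyckStep → ℤ
  | U => 1
  | D => -1

lemma toInt_injective : Function.Injective toInt := by
  intro s t; cases s <;> cases t <;> simp [toInt]

lemma range_toInt : Set.range toInt = {1, -1} := by
  ext x; constructor
  · rintro ⟨s, rfl⟩; cases s <;> simp [toInt]
  · rintro (rfl | rfl)
    exacts [⟨U, rfl⟩, ⟨D, rfl⟩]

lemma sum_map_toInt (s : List DyckStep) : (s.map toInt).sum = s.count U - s.count D := by
  induction s with
  | nil => simp
  | cons a s ih => cases a <;> simp [toInt, ih] <;> ring

end DyckStep

open DyckStep

theorem exists_dyckWord_map_toInt_iff (d : List ℤ) :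
    (∃ p : DyckWord, p.toList.map toInt = d) ↔
      (∀ x ∈ d, x = 1 ∨ x = -1) ∧ (∀ k, 0 ≤ (d.take k).sum) ∧ d.sum = 0 := by
  constructor
  · rintro ⟨p, rfl⟩
    refine ⟨?_, fun k => ?_, ?_⟩
    · intro x hx
      obtain ⟨s, -, rfl⟩ := mem_map.1 hx
      cases s <;> simp [toInt]
    · rw [← map_take, sum_map_toInt]
      have := p.count_D_le_count_U k
      omega
    · rw [sum_map_toInt, p.count_U_eq_count_D, sub_self]
  · rintro ⟨hd, hpre, hsum⟩
    obtain ⟨s, rfl⟩ : d ∈ Set.range (map toInt) := by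
      simpa [Set.range_list_map, range_toInt] using hd
    refine ⟨⟨s, ?_, fun k => ?_⟩, rfl⟩
    · rw [sum_map_toInt] at hsum; omega
    · have := hpre k
      rw [← map_take, sum_map_toInt] at this; omega

section PrefixSums

variable {M : Type*} [AddMonoid M] [DecidableEq M]

lemma List.sum_filter_ne_zero (l : List M) : (l.filter (· ≠ 0)).sum = l.sum := by
  induction l with
  | nil => rfl
  | cons x l ih => by_cases hx : x = 0 <;> simp_all

lemma List.exists_sum_take_filter_ne_zero_eq (l : List M) (k : ℕ) :
    ∃ j, ((l.filter (· ≠ 0)).take k).sum = (l.take j).sum := by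
  induction l generalizing k with
  | nil => exact ⟨0, by simp⟩
  | cons x l ih =>
    by_cases hx : x = 0
    · obtain ⟨j, hj⟩ := ih k
      exact ⟨j + 1, by simp_all⟩
    · cases k with
      | zero => exact ⟨0, by simp⟩
      | succ k =>
        obtain ⟨j, hj⟩ := ih k
        exact ⟨j + 1, by simp_all⟩

lemma List.exists_sum_take_eq_sum_take_filter_ne_zero (l : List M) (k : ℕ) :
    ∃ j, (l.take k).sum = ((l.filter (· ≠ 0)).take j).sum := by
  refine ⟨((l.take k).filter (· ≠ 0)).length, ?_⟩
  rw [← prefix_iff_eq_take.1 ((take_prefix k l).filter _), sum_filter_ne_zero]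

end PrefixSums

def motzkinPathsOver (m : ℕ) (p : DyckWord) : Set (List ℤ) :=
  {l | l.length = m ∧ l.filter (· ≠ 0) = p.toList.map toInt}

theorem isMotzkinPath_iff (l : List ℤ) :
    IsMotzkinPath l ↔ ∃ p : DyckWord, p.toList.map toInt = l.filter (· ≠ 0) := by
  rw [exists_dyckWord_map_toInt_iff, sum_filter_ne_zero, IsMotzkinPath]
  refine and_congr ?_ (and_congr_left' ⟨fun h k => ?_, fun h k => ?_⟩)
  · simp only [mem_filter]
    grind
  · obtain ⟨j, hj⟩ := exists_sum_take_filter_ne_zero_eq l k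
    exact hj ▸ h j
  · obtain ⟨j, hj⟩ := exists_sum_take_eq_sum_take_filter_ne_zero l k
    exact hj ▸ h j

theorem encard_motzkinPathsOver (m : ℕ) (p : DyckWord) :
    (motzkinPathsOver m p).encard = m.choose (2 * p.semilength) := by
  rw [motzkinPathsOver, encard_setOf_length_eq_filter_ne_eq, length_map,
    p.two_mul_semilength_eq_length]
  intro h
  obtain ⟨s, -, hs⟩ := mem_map.1 h
  cases s <;> simp [toInt] at hs

theorem disjoint_motzkinPathsOver (m : ℕ) {p q : DyckWord} (h : p ≠ q) :
    Disjoint (motzkinPathsOver m p) (motzkinPathsOver m q) := by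
  refine Set.disjoint_left.2 fun l hp hq => h ?_
  exact DyckWord.ext ((map_injective_iff.2 toInt_injective) (hp.2.symm.trans hq.2))

theorem setOf_isMotzkinPath_eq_iUnion {m N : ℕ} (hN : m < 2 * N) :
    {l : List ℤ | l.length = m ∧ IsMotzkinPath l} =
      ⋃ k ∈ (Finset.range N : Set ℕ), ⋃ p : {p : DyckWord // p.semilength = k},
        motzkinPathsOver m p := by
  ext l
  simp only [Set.mem_ofPred_eq, isMotzkinPath_iff, Set.mem_iUnion, Finset.coe_range, Set.mem_Iio,
    motzkinPathsOver, Subtype.exists, exists_prop]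
  constructor
  · rintro ⟨hl, p, hp⟩
    refine ⟨p.semilength, ?_, p, rfl, hl, hp.symm⟩
    have := congrArg length hp
    have := length_filter_le (· ≠ 0) l
    rw [length_map, ← p.two_mul_semilength_eq_length] at *
    omega
  · rintro ⟨k, -, p, -, hl, hp⟩
    exact ⟨hl, p, hp.symm⟩

theorem motzkin_eq_sum_range {m N : ℕ} (hN : m < 2 * N) :
    motzkin m = ∑ k ∈ Finset.range N, m.choose (2 * k) * catalan k := by
  have hcard : {l : List ℤ | l.length = m ∧ IsMotzkinPath l}.encard =
      ∑ k ∈ Finset.range N, m.choose (2 * k) * catalan k := by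
    rw [setOf_isMotzkinPath_eq_iUnion hN, Set.Finite.encard_biUnion (Finset.finite_toSet _),
      finsum_mem_coe_finset]
    · push_cast
      refine Finset.sum_congr rfl fun k _ => ?_
      rw [Set.encard_iUnion_of_finite, finsum_eq_sum_of_fintype]
      · rw [Finset.sum_congr rfl fun p _ => by rw [encard_motzkinPathsOver, p.2],
          Finset.sum_const, Finset.card_univ, DyckWord.card_dyckWord_semilength_eq_catalan,
          nsmul_eq_mul, mul_comm]
      · exact fun p q h => disjoint_motzkinPathsOver m (Subtype.coe_injective.ne h)
    · intro i _ j _ hij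
      simp only [Function.onFun, Set.disjoint_iUnion_left, Set.disjoint_iUnion_right]
      intro p q
      exact disjoint_motzkinPathsOver m fun h => hij (by rw [← p.2, ← q.2, h])
  rw [motzkin, ← Set.coe_ofPred, Nat.card_coe_set_eq, Set.ncard_def, hcard, ENat.toNat_natCast]

theorem motzkin_succ (m : ℕ) :
    motzkin (m + 1) =
      motzkin m + ∑ k ∈ Finset.Icc 1 ((m + 1) / 2), m.choose (2 * k - 1) * catalan k := by
  have hN : m + 1 < 2 * ((m + 1) / 2 + 1) := by omega
  have hpascal (k : ℕ) :
      (m + 1).choose (2 * (k + 1)) = m.choose (2 * (k + 1) - 1) + m.choose (2 * (k + 1)) := by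
    rw [show 2 * (k + 1) = 2 * k + 1 + 1 by ring, Nat.choose_succ_succ', Nat.add_sub_cancel]
  rw [motzkin_eq_sum_range hN, motzkin_eq_sum_range (by omega : m < 2 * ((m + 1) / 2 + 1)),
    Finset.sum_range_succ', Finset.sum_range_succ', ← Finset.Ico_add_one_right_eq_Icc,
    Finset.sum_Ico_eq_sum_range, Nat.add_sub_cancel]
  simp only [hpascal, add_mul, Finset.sum_add_distrib, mul_zero, Nat.choose_zero_right,
    add_comm 1]
  ring

/-- `M_{n-1} - M_{n-2} = ∑_{k=1}^{⌊(n-1)/2⌋} C(n-2, 2k-1) · Cat_k` for `n ≥ 2`. -/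
theorem stmt4 (n : ℕ) (hn : 2 ≤ n) :
    motzkin (n - 1) - motzkin (n - 2) =
      ∑ k ∈ Finset.Icc 1 ((n - 1) / 2), Nat.choose (n - 2) (2 * k - 1) * catalan k := by
  obtain ⟨m, rfl⟩ : ∃ m, n = m + 2 := ⟨n - 2, by omega⟩
  rw [show m + 2 - 1 = m + 1 by omega, Nat.add_sub_cancel, motzkin_succ, Nat.add_sub_cancel_left]
end

section
/- For n ≥ 3, there are exactly n - 1 permutations in S_n that simultaneously avoid the consecutive patterns 132, 312, 321, and 213. -/
/-!
Every consecutive triple of a permutation avoiding 132, 312, 321 and 213 has pattern 123 or 231,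
so its first letter is smaller than its second. Hence all letters but the last increase, which
forces `w = (v v+1 … n-1)` where `v` is the last letter, i.e. `Fin.cycleIcc v (last _)`.
Such a cycle avoids the four patterns unless its last triple is `(n-3, n-1, n-2)`, i.e. unless
`v = n - 2` (counting letters from `0`); the remaining `n - 1` values of `v` give the answer.
-/

open Equiv Fin

theorem avoidsAll_iff_forall_patAt_p123_or_p231 {n : ℕ} (w : Perm (Fin n)) :
    AvoidsAll w {p132, p312, p321, p213} ↔
      ∀ i (h : i + 3 ≤ n), PatAt w i h p123 ∨ PatAt w i h p231 := by
  refine forall₂_congr fun i h => ?_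
  have distinct {j k : ℕ} (hj : j < n) (hk : k < n) (hjk : j ≠ k) :
      (w ⟨j, hj⟩ : ℕ) ≠ w ⟨k, hk⟩ :=
    Fin.val_ne_of_ne (w.injective.ne (Fin.ne_of_val_ne hjk))
  have h01 := distinct (j := i) (k := i + 1) (by omega) (by omega) (by omega)
  have h02 := distinct (j := i) (k := i + 2) (by omega) (by omega) (by omega)
  have h12 := distinct (j := i + 1) (k := i + 2) (by omega) (by omega) (by omega)
  simp only [Set.mem_insert_iff, Set.mem_singleton_iff, forall_eq_or_imp, forall_eq, PatAt,
    p123, p132, p213, p231, p312, p321]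
  omega

section

variable {m : ℕ}

theorem strictMono_comp_castSucc_of_patAt (w : Perm (Fin (m + 1)))
    (hw : ∀ i (h : i + 3 ≤ m + 1), PatAt w i h p123 ∨ PatAt w i h p231) :
    StrictMono (w ∘ castSucc) := by
  rcases m with _ | k
  · exact fun a => a.elim0
  refine Fin.strictMono_iff_lt_succ.2 fun i => ?_
  rcases hw i (by omega) with h | h
  exacts [h.1, h.2]

theorem eq_cycleIcc_last_of_strictMono (w : Perm (Fin (m + 1)))
    (hw : StrictMono (w ∘ castSucc)) : w = cycleIcc (w (last m)) (last m) := by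
  have hrange : Set.range (w ∘ castSucc) = Set.range (w (last m)).succAbove := by
    rw [Set.range_comp, ← succAbove_last, range_succAbove, range_succAbove,
      Set.image_compl_eq w.bijective, Set.image_singleton]
  have hprefix := (hw.range_inj (strictMono_succAbove _)).1 hrange
  ext j : 1
  induction j using Fin.lastCases with
  | last => rw [cycleIcc_of_last (le_last _)]
  | cast j =>
    rw [← succAbove_last_apply, ← Function.comp_apply (f := cycleIcc _ _),
      cycleIcc_comp_succAbove _ _ (le_last _), succAbove_last_apply, ← hprefix]
    rfl

theorem val_cycleIcc_last (v j : Fin (m + 1)) :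
    (cycleIcc v (last m) j : ℕ) =
      if (j : ℕ) = m then (v : ℕ) else if (j : ℕ) < v then j else j + 1 := by
  rcases lt_or_ge j v with hjv | hvj
  · have : (j : ℕ) ≠ m := by have := v.is_le; omega
    rw [cycleIcc_of_lt hjv, if_neg this, if_pos (Fin.lt_def.1 hjv)]
  · rw [cycleIcc_of_le_of_le hvj (le_last j)]
    have := Fin.le_def.1 hvj
    by_cases hj : (j : ℕ) = m
    · rw [if_pos (Fin.ext hj), if_pos hj]
    · rw [if_neg (fun h => hj (congrArg Fin.val h)), if_neg hj, if_neg (by omega),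
        Fin.val_add_one_of_lt' (by omega)]

theorem eq_cycleIcc_last_of_avoidsAll {w : Perm (Fin (m + 1))}
    (hw : AvoidsAll w {p132, p312, p321, p213}) : w = cycleIcc (w (last m)) (last m) :=
  eq_cycleIcc_last_of_strictMono w <| strictMono_comp_castSucc_of_patAt w <|
    (avoidsAll_iff_forall_patAt_p123_or_p231 w).1 hw

theorem avoidsAll_cycleIcc_last_iff (hm : 2 ≤ m) (v : Fin (m + 1)) :
    AvoidsAll (cycleIcc v (last m)) {p132, p312, p321, p213} ↔ (v : ℕ) ≠ m - 1 := by
  simp only [avoidsAll_iff_forall_patAt_p123_or_p231, PatAt, val_cycleIcc_last, p123, p231]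
  constructor
  · intro h hv
    have := h (m - 2) (by omega)
    split_ifs at this <;> omega
  · intro hv i hi
    split_ifs <;> omega

def avoidersEquiv (hm : 2 ≤ m) :
    {w : Perm (Fin (m + 1)) // AvoidsAll w {p132, p312, p321, p213}} ≃
      {v : Fin (m + 1) // (v : ℕ) ≠ m - 1} where
  toFun w := ⟨w.1 (last m), by
    rw [← avoidsAll_cycleIcc_last_iff hm, ← eq_cycleIcc_last_of_avoidsAll w.2]
    exact w.2⟩
  invFun v := ⟨cycleIcc v.1 (last m), (avoidsAll_cycleIcc_last_iff hm v.1).2 v.2⟩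
  left_inv w := Subtype.ext (eq_cycleIcc_last_of_avoidsAll w.2).symm
  right_inv v := Subtype.ext (cycleIcc_of_last (le_last _))

end

theorem Fin.card_subtype_val_ne {n a : ℕ} (ha : a < n) :
    Nat.card {v : Fin n // (v : ℕ) ≠ a} = n - 1 := by
  rw [Nat.card_eq_fintype_card, Fintype.card_subtype_compl, Fintype.card_fin]
  have : Fintype.card {v : Fin n // (v : ℕ) = a} = 1 :=
    Fintype.card_eq_one_iff.2 ⟨⟨⟨a, ha⟩, rfl⟩, fun v => Subtype.ext (Fin.ext v.2)⟩
  rw [this]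

/-- for `n ≥ 3` there are exactly `n - 1` permutations in `S_n` avoiding the
consecutive patterns 132, 312, 321 and 213. -/
theorem stmt5 (n : ℕ) (hn : 3 ≤ n) :
    Nat.card {w : Equiv.Perm (Fin n) // AvoidsAll w {p132, p312, p321, p213}} = n - 1 := by
  obtain ⟨m, rfl⟩ : ∃ m, n = m + 1 := ⟨n - 1, by omega⟩
  rw [Nat.card_congr (avoidersEquiv (by omega)), Fin.card_subtype_val_ne (by omega)]
end

section
/- Under the equivalence relation on S_n generated by replacing a factor of three adjacent letters whose order pattern lies in {123, 132, 321} by a rearrangement of those letters forming another pattern in {123, 132, 321}, the position parity of the letter 1 is invariant: if w ≡ w' then the position of 1 in w and the position of 1 in w' have the same parity. -/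
/-!
A move rearranges the letters in a window of three adjacent positions and fixes all others.
If the letter `1` lies outside the window, its position does not change. Otherwise it lies in
the window both before and after the move, and since none of `123`, `132`, `321` has its
smallest letter in the middle, it sits at one end of the window: at a position with the
parity of the window's start in both cases.
-/

theorem pos_middle_of_mem_K {r : Pat} (hr : r ∈ ({p123, p132, p321} : Set Pat))
    {a b c : ℕ} (h : r a b c) : 0 < b := by
  rcases hr with rfl | rfl | rfl <;> simp only [p123, p132, p321] at h <;> omega

theorem Equiv.Perm.symm_apply_eq_of_eqOn_compl {α : Type*} {w w' : Equiv.Perm α} {S : Set α}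
    (h : ∀ j ∉ S, w j = w' j) {x : α} (hx : w.symm x ∉ S) : w'.symm x = w.symm x := by
  rw [Equiv.symm_apply_eq, ← h _ hx, Equiv.apply_symm_apply]

section

variable {n : ℕ}

theorem mod_two_eq_of_patAt_of_apply_eq_zero {u : Equiv.Perm (Fin n)} {i : ℕ} {hi : i + 3 ≤ n}
    {r : Pat} (hr : r ∈ ({p123, p132, p321} : Set Pat)) (hu : PatAt u i hi r) {k : Fin n}
    (hk : (u k).val = 0) (hik : i ≤ k.val) (hki : k.val < i + 3) : k.val % 2 = i % 2 := by
  have hmid : k.val ≠ i + 1 := by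
    intro h
    rw [show k = ⟨i + 1, by omega⟩ from Fin.ext h] at hk
    exact (pos_middle_of_mem_K hr hu).ne' hk
  omega

theorem step3_symm_mod_two_eq {w w' : Equiv.Perm (Fin n)}
    (hs : Step3 {({p123, p132, p321} : Set Pat)} w w') {z : Fin n} (hz : z.val = 0) :
    (w.symm z).val % 2 = (w'.symm z).val % 2 := by
  obtain ⟨Q, rfl, i, hi, hout, ⟨p, hp, hwp⟩, ⟨q, hq, hwq⟩⟩ := hs
  set S : Set (Fin n) := {j | i ≤ j.val ∧ j.val < i + 3}
  have hout' : ∀ j ∉ S, w j = w' j := fun j hj => hout j <| by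
    simp only [S, Set.mem_ofPred_eq, not_and, not_lt] at hj
    omega
  by_cases hwS : w.symm z ∈ S
  · by_cases hw'S : w'.symm z ∈ S
    · have hwz : (w (w.symm z)).val = 0 := by rw [Equiv.apply_symm_apply, hz]
      have hw'z : (w' (w'.symm z)).val = 0 := by rw [Equiv.apply_symm_apply, hz]
      rw [mod_two_eq_of_patAt_of_apply_eq_zero hp hwp hwz hwS.1 hwS.2,
        mod_two_eq_of_patAt_of_apply_eq_zero hq hwq hw'z hw'S.1 hw'S.2]
    · rw [Equiv.Perm.symm_apply_eq_of_eqOn_compl (fun j hj => (hout' j hj).symm) hw'S]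
  · rw [Equiv.Perm.symm_apply_eq_of_eqOn_compl hout' hwS]

end

/-- under the `{123, 132, 321}`-equivalence, the position parity of the
letter `1` is invariant. -/
theorem stmt6 (n : ℕ) (hn : 1 ≤ n) (w w' : Equiv.Perm (Fin n))
    (h : PattEquiv {({p123, p132, p321} : Set Pat)} w w') :
    (w.symm ⟨0, by omega⟩).val % 2 = (w'.symm ⟨0, by omega⟩).val % 2 := by
  let parityOfOne (v : Equiv.Perm (Fin n)) : ℕ := (v.symm ⟨0, by omega⟩).val % 2
  exact (eq_equivalence.comap parityOfOne).eqvGen_iff.mp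
    (h.mono fun _ _ hs => step3_symm_mod_two_eq hs rfl)
end

section
/- Define the fall of x ∈ S_n as the set of k ∈ {1,...,n} such that every letter greater than k in x occupies a position of the same parity as the position of k. If the fall of x has size j, then the number of permutations y ∈ S_n such that every letter has the same position parity in y as in x and the letters of the fall appear in the same relative order in y as in x equals (⌊n/2⌋! · ⌈n/2⌉!) / j!. -/
/-- The fall of `x`: letters `k` such that every letter greater than `k` has the same
position parity as `k`. -/
def fallSet {n : ℕ} (x : Equiv.Perm (Fin n)) : Set (Fin n) :=
  {k | ∀ v : Fin n, k < v → (x.symm v).val % 2 = (x.symm k).val % 2}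

/-!
Substituting `τ = y⁻¹ * x` turns the count into the number of permutations `τ` of positions that
preserve parity and are increasing on the set `s` of positions of the fall letters, all of which
have the same parity. Every parity-preserving permutation factors uniquely as such a `τ` times a
permutation of `s` (sort its values on `s`), so this number is `⌈n/2⌉! ⌊n/2⌋! / |s|!`.
-/

open Equiv

namespace Equiv.Perm

variable {α : Type*} [LinearOrder α]

theorem eq_one_of_strictMonoOn_mul_ofSubtype {s : Finset α} {τ : Perm α} {ρ : Perm s}
    (hτ : StrictMonoOn τ s) (hτρ : StrictMonoOn (τ * ofSubtype ρ) s) : ρ = 1 := by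
  have hρ : StrictMono ρ := fun a b hab => by
    have := hτρ a.2 b.2 hab
    rwa [mul_apply, mul_apply, ofSubtype_apply_coe, ofSubtype_apply_coe,
      hτ.lt_iff_lt (ρ a).2 (ρ b).2] at this
  exact Equiv.ext fun a => DFunLike.congr_fun
    (Subsingleton.elim (hρ.orderIsoOfSurjective ρ ρ.surjective) (OrderIso.refl _)) a

theorem exists_strictMonoOn_mul_ofSubtype (s : Finset α) (σ : Perm α) :
    ∃ ρ : Perm s, StrictMonoOn (σ * ofSubtype ρ) s := by
  let t := s.map σ.toEmbedding
  let e : s ≃ t := σ.subtypeEquiv fun a => by simp [t]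
  let u : s ≃o t := (s.orderIsoOfFin rfl).symm.trans (t.orderIsoOfFin (s.card_map _))
  refine ⟨u.toEquiv.trans e.symm, fun a ha b hb hab => ?_⟩
  have hsorted : ∀ c (hc : c ∈ s), (σ * ofSubtype (u.toEquiv.trans e.symm)) c = u ⟨c, hc⟩ :=
    fun c hc => by
      rw [mul_apply, ofSubtype_apply_of_mem _ hc]
      exact congrArg Subtype.val (e.apply_symm_apply _)
  rw [hsorted a ha, hsorted b hb]
  exact u.strictMono hab

noncomputable def strictMonoOnProdPermEquiv (s : Finset α) :
    {τ : Perm α // StrictMonoOn τ s} × Perm s ≃ Perm α :=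
  Equiv.ofBijective (fun p => p.1.1 * ofSubtype p.2) <| by
    refine ⟨fun ⟨⟨τ, hτ⟩, π⟩ ⟨⟨τ', hτ'⟩, π'⟩ h => ?_, fun σ => ?_⟩
    · change τ * _ = τ' * _ at h
      have hτ'τ : τ' = τ * ofSubtype (π * π'⁻¹) := by
        rw [map_mul, map_inv, ← mul_assoc, h, mul_inv_cancel_right]
      obtain rfl : π = π' :=
        mul_inv_eq_one.mp (eq_one_of_strictMonoOn_mul_ofSubtype hτ (hτ'τ ▸ hτ'))
      obtain rfl : τ = τ' := by simpa using hτ'τ.symm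
      rfl
    · obtain ⟨ρ, hρ⟩ := exists_strictMonoOn_mul_ofSubtype s σ
      exact ⟨⟨⟨_, hρ⟩, ρ⁻¹⟩, by simp [map_inv]⟩

theorem comp_mul_ofSubtype_eq_iff {β : Type*} {s : Finset α} {f : α → β}
    (hs : ∀ a ∈ s, ∀ b ∈ s, f a = f b) (τ : Perm α) (π : Perm s) :
    f ∘ ⇑(τ * ofSubtype π) = f ↔ f ∘ τ = f := by
  have hπ : f ∘ ofSubtype π = f := funext fun a => by
    by_cases ha : a ∈ s
    · simp [ofSubtype_apply_of_mem π ha, hs _ (π ⟨a, ha⟩).2 a ha]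
    · simp [ofSubtype_apply_of_not_mem π ha]
  conv_lhs => rw [coe_mul, ← Function.comp_assoc, ← hπ]
  exact (ofSubtype π).surjective.injective_comp_right.eq_iff.trans (by rw [hπ])

theorem card_strictMonoOn_comp_eq_mul_factorial {β : Type*} {s : Finset α} {f : α → β}
    (hs : ∀ a ∈ s, ∀ b ∈ s, f a = f b) :
    Nat.card {τ : Perm α // StrictMonoOn τ s ∧ f ∘ τ = f} * s.card.factorial =
      Nat.card {τ : Perm α // f ∘ τ = f} := by
  let e := ((strictMonoOnProdPermEquiv s).subtypeEquiv
    (p := fun p : {τ : Perm α // StrictMonoOn τ s} × Perm s => f ∘ p.1.1 = f)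
    (q := fun σ : Perm α => f ∘ σ = f)
    fun p => (comp_mul_ofSubtype_eq_iff hs p.1.1 p.2).symm).symm.trans
    (prodSubtypeFstEquivSubtypeProd (p := fun τ : {τ : Perm α // StrictMonoOn τ s} => f ∘ τ.1 = f))
  rw [Nat.card_congr e, Nat.card_prod, ← Nat.card_congr (subtypeSubtypeEquivSubtypeInter
    (fun τ : Perm α => StrictMonoOn τ s) fun τ => f ∘ τ = f),
    Nat.card_perm, Nat.card_eq_finsetCard]

theorem strictMonoOn_inv_mul_image_symm_iff {x y : Perm α} {F : Set α} :
    StrictMonoOn ⇑(y⁻¹ * x) (x.symm '' F) ↔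
      ∀ k ∈ F, ∀ m ∈ F, (y.symm k < y.symm m ↔ x.symm k < x.symm m) := by
  have hyx : ∀ k, (y⁻¹ * x) (x.symm k) = y.symm k := fun k => by simp
  refine ⟨fun h k hk m hm => ?_, fun h => ?_⟩
  · simpa only [hyx] using h.lt_iff_lt (Set.mem_image_of_mem _ hk) (Set.mem_image_of_mem _ hm)
  · rintro _ ⟨k, hk, rfl⟩ _ ⟨m, hm, rfl⟩ hlt
    rw [hyx, hyx]
    exact (h k hk m hm).2 hlt

end Equiv.Perm

namespace Fin

variable {n : ℕ}

/-- Valued in `Fin 2` rather than `ℕ` so that `DomMulAct.stabilizer_card`, which needs a finite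
codomain, counts the permutations preserving it. -/
def parity (a : Fin n) : Fin 2 := Fin.ofNat 2 a

theorem val_parity (a : Fin n) : (a.parity : ℕ) = a % 2 :=
  Fin.val_ofNat 2 a

theorem parity_eq_parity_iff {a b : Fin n} : a.parity = b.parity ↔ a.val % 2 = b.val % 2 := by
  simp only [Fin.ext_iff, val_parity]

def parityFiberEquiv (n : ℕ) (r : Fin 2) :
    {a : Fin n // a.parity = r} ≃ Fin ((n + 1 - r) / 2) where
  toFun a := ⟨a.1 / 2, by have := a.1.2; have := a.2 ▸ a.1.val_parity; omega⟩
  invFun k := ⟨⟨2 * k + r, by have := k.2; omega⟩, by rw [Fin.ext_iff, val_parity]; dsimp; omega⟩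
  left_inv a := by
    have := a.2 ▸ a.1.val_parity
    ext; dsimp; omega
  right_inv k := by ext; dsimp; omega

theorem card_perm_comp_parity (n : ℕ) :
    Nat.card {τ : Perm (Fin n) // parity ∘ τ = parity} =
      ((n + 1) / 2).factorial * (n / 2).factorial := by
  rw [Nat.card_eq_fintype_card, DomMulAct.stabilizer_card, Fin.prod_univ_two,
    Fintype.card_congr (parityFiberEquiv n 0), Fintype.card_congr (parityFiberEquiv n 1),
    Fintype.card_fin, Fintype.card_fin]
  rfl

theorem parity_comp_inv_mul_eq_iff {x y : Perm (Fin n)} :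
    parity ∘ ⇑(y⁻¹ * x) = parity ↔ ∀ v, (y.symm v).val % 2 = (x.symm v).val % 2 := by
  simp only [funext_iff, Function.comp_apply, parity_eq_parity_iff]
  exact ⟨fun h v => by simpa using h (x.symm v), fun h a => by simpa using h (x a)⟩

end Fin

theorem parity_symm_eq_of_mem_fallSet {n : ℕ} {x : Perm (Fin n)} {k m : Fin n}
    (hk : k ∈ fallSet x) (hm : m ∈ fallSet x) : (x.symm k).parity = (x.symm m).parity := by
  rw [Fin.parity_eq_parity_iff]
  rcases lt_trichotomy k m with h | rfl | h
  · exact (hk m h).symm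
  · rfl
  · exact hm k h

/-- if the fall of `x` has size `j`, then the number of permutations with
the same position parity of every letter as in `x` and with the fall letters in the same
relative order is `(⌊n/2⌋! · ⌈n/2⌉!) / j!`. -/
theorem stmt11 (n j : ℕ) (x : Equiv.Perm (Fin n)) (hj : (fallSet x).ncard = j) :
    Nat.card {y : Equiv.Perm (Fin n) //
      (∀ v : Fin n, (y.symm v).val % 2 = (x.symm v).val % 2) ∧
      (∀ k ∈ fallSet x, ∀ m ∈ fallSet x, (y.symm k < y.symm m ↔ x.symm k < x.symm m))} =
    Nat.factorial (n / 2) * Nat.factorial ((n + 1) / 2) / Nat.factorial j := by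
  classical
  let s := (x.symm '' fallSet x).toFinset
  have hs : ∀ a ∈ s, ∀ b ∈ s, a.parity = b.parity := by
    simp only [s, Set.mem_toFinset, Set.forall_mem_image]
    exact fun k hk m hm => parity_symm_eq_of_mem_fallSet hk hm
  have hcard : s.card = j := by
    rw [← Set.ncard_eq_toFinset_card', Set.ncard_image_of_injective _ x.symm.injective, hj]
  have hcount := Perm.card_strictMonoOn_comp_eq_mul_factorial hs
  rw [Fin.card_perm_comp_parity, hcard, Set.coe_toFinset] at hcount
  rw [mul_comm, ← hcount, Nat.mul_div_cancel _ j.factorial_pos]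
  exact Nat.card_congr <| ((Equiv.inv _).trans (Equiv.mulRight x)).subtypeEquiv fun y =>
    (and_congr Fin.parity_comp_inv_mul_eq_iff.symm
      Perm.strictMonoOn_inv_mul_image_symm_iff.symm).trans and_comm
end

section
/- Under the equivalence on S_n generated by transformations 123 ↔ 231 and 213 ↔ 132 on factors of three adjacent letters, a permutation w that begins with n(n-1)(n-2)...(n-k+1) for some k ≥ 0 is equivalent only to permutations that also begin with n(n-1)(n-2)...(n-k+1); in particular, the length of the longest initial decreasing run of consecutive values starting with n is invariant. -/
/-!
Every pattern in the parts `{123, 231}` and `{213, 132}` has a letter larger than its first one.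
If `w` begins with `n (n-1) … (n-k+1)`, then each letter `w i` with `i < k` exceeds every letter
to its right, so no move can act on a window starting inside that prefix; moves acting further
right leave the prefix untouched.
-/

def FirstLetterNotMax (p : Pat) : Prop :=
  ∀ a b c, p a b c → a < b ∨ a < c

/-- In the paper's 1-based letters: `w` begins with `n (n-1) … (n-k+1)`. -/
def BeginsWithTopRun {n : ℕ} (k : ℕ) (w : Equiv.Perm (Fin n)) : Prop :=
  ∀ j (hj : j < n), j < k → (w ⟨j, hj⟩).val = n - 1 - j

theorem Step3.symm {n : ℕ} {parts : Set (Set Pat)} {w w' : Equiv.Perm (Fin n)}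
    (h : Step3 parts w w') : Step3 parts w' w := by
  obtain ⟨Q, hQ, i, hi, heq, hp, hq⟩ := h
  exact ⟨Q, hQ, i, hi, fun j hj => (heq j hj).symm, hq, hp⟩

theorem BeginsWithTopRun.lt_of_lt {n k : ℕ} {w : Equiv.Perm (Fin n)}
    (hw : BeginsWithTopRun k w) {i m : Fin n} (hik : i.val < k) (him : i < m) : w m < w i := by
  by_contra! hge
  -- a letter `w m ≥ n - 1 - i` is a prefix letter, found at position `n - 1 - w m ≤ i`
  have hwi : (w i).val = n - 1 - i := hw i i.isLt hik
  have hwm : (w m).val < n := (w m).isLt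
  have hidx : n - 1 - (w m).val < n := by omega
  have hfix : w ⟨n - 1 - (w m).val, hidx⟩ = w m :=
    Fin.ext (by rw [hw _ hidx (by omega)]; omega)
  have := congrArg Fin.val (w.injective hfix)
  simp only [Fin.le_def, Fin.lt_def] at hge him this
  omega

theorem BeginsWithTopRun.of_step3 {n k : ℕ} {parts : Set (Set Pat)}
    (hparts : ∀ Q ∈ parts, ∀ p ∈ Q, FirstLetterNotMax p) {w w' : Equiv.Perm (Fin n)}
    (hw : BeginsWithTopRun k w) (h : Step3 parts w w') : BeginsWithTopRun k w' := by
  obtain ⟨Q, hQ, i, hi, heq, ⟨p, hp, hpat⟩, -⟩ := h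
  by_cases hik : k ≤ i
  · intro j hj hjk
    rw [← heq ⟨j, hj⟩ (Or.inl (by simp only; omega))]
    exact hw j hj hjk
  · have h1 := hw.lt_of_lt (i := ⟨i, by omega⟩) (m := ⟨i + 1, by omega⟩) (by simp only; omega)
      (by simp [Fin.lt_def])
    have h2 := hw.lt_of_lt (i := ⟨i, by omega⟩) (m := ⟨i + 2, by omega⟩) (by simp only; omega)
      (by simp [Fin.lt_def])
    rw [Fin.lt_def] at h1 h2
    rcases hparts Q hQ p hp _ _ _ hpat with h | h <;> omega

theorem BeginsWithTopRun.iff_of_pattEquiv {n k : ℕ} {parts : Set (Set Pat)}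
    (hparts : ∀ Q ∈ parts, ∀ p ∈ Q, FirstLetterNotMax p) {w w' : Equiv.Perm (Fin n)}
    (h : PattEquiv parts w w') : BeginsWithTopRun k w ↔ BeginsWithTopRun k w' := by
  induction h with
  | rel a b hab => exact ⟨(·.of_step3 hparts hab), (·.of_step3 hparts hab.symm)⟩
  | refl => exact Iff.rfl
  | symm _ _ _ ih => exact ih.symm
  | trans _ _ _ _ _ ih₁ ih₂ => exact ih₁.trans ih₂

theorem firstLetterNotMax_of_mem_parts :
    ∀ Q ∈ ({({p123, p231} : Set Pat), ({p213, p132} : Set Pat)} : Set (Set Pat)),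
      ∀ p ∈ Q, FirstLetterNotMax p := by
  simp only [Set.mem_insert_iff, Set.mem_singleton_iff, forall_eq_or_imp, forall_eq]
  refine ⟨⟨?_, ?_⟩, ?_, ?_⟩ <;>
    · intro a b c habc
      simp only [p123, p231, p213, p132] at habc
      omega

/-- under the `{123, 231}{213, 132}`-equivalence, a permutation beginning
with `n (n-1) … (n-k+1)` is only equivalent to permutations beginning with the same
decreasing run. -/
theorem stmt12 (n k : ℕ) (hk : k ≤ n) (w w' : Equiv.Perm (Fin n))
    (hw : ∀ j : ℕ, ∀ hj : j < k, (w ⟨j, by omega⟩).val = n - 1 - j)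
    (h : PattEquiv {({p123, p231} : Set Pat), ({p213, p132} : Set Pat)} w w') :
    ∀ j : ℕ, ∀ hj : j < k, (w' ⟨j, by omega⟩).val = n - 1 - j := by
  have hrun : BeginsWithTopRun k w := fun j _ hjk => hw j hjk
  have hrun' := (BeginsWithTopRun.iff_of_pattEquiv firstLetterNotMax_of_mem_parts h).mp hrun
  exact fun j hjk => hrun' j (by omega) hjk
end

section
/- Let P be a set partition of S_c and let P' be the partition of S_{c+1} into the equivalence classes of the P-equivalence on S_{c+1}. Then for every n ≥ c+1, the P-equivalence on S_n and the P'-equivalence on S_n coincide. -/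
/-!
Two permutations of `Fin n` that agree outside a window of `K` consecutive positions differ by a
permutation `ρ` of the window, `w' = w * windowPerm i h ρ`, and if `u` is the pattern of `w` on the
window, then `u * ρ` is the pattern of `w'` there. A `P`-move of `w` inside the window is the same
thing as a `P`-move of `u`, so `P`-equivalent patterns `u ~ u * ρ` of `S_K` lift to `P`-equivalent
permutations `w ~ w * windowPerm i h ρ` of `S_n`: every move for the partition of `S_K` into
`P`-classes is a chain of `P`-moves. Conversely, when `c ≤ K ≤ n` every `P`-move of `S_n` takes
place inside some window of length `K`, where it moves between two patterns of one `P`-class.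
-/

/-- The factor of `w` at positions `i, …, i+k-1` has order pattern (standardization) `σ`. -/
def PatternAt {n k : ℕ} (w : Equiv.Perm (Fin n)) (i : ℕ) (h : i + k ≤ n)
    (σ : Equiv.Perm (Fin k)) : Prop :=
  ∀ a b : Fin k, σ a < σ b ↔
    w ⟨i + a.val, by have := a.isLt; omega⟩ < w ⟨i + b.val, by have := b.isLt; omega⟩

/-- One replacement move for a replacement partition `P` of `S_k`: a factor of `k`
adjacent letters whose pattern lies in some part `Q` of `P` is rearranged (same letters,
all other positions unchanged) into a factor whose pattern also lies in `Q`. -/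
def StepK {k n : ℕ} (P : Set (Set (Equiv.Perm (Fin k)))) (w w' : Equiv.Perm (Fin n)) : Prop :=
  ∃ Q ∈ P, ∃ i : ℕ, ∃ h : i + k ≤ n,
    (∀ j : Fin n, (j.val < i ∨ i + k ≤ j.val) → w j = w' j) ∧
    (∃ σ ∈ Q, PatternAt w i h σ) ∧ (∃ τ ∈ Q, PatternAt w' i h τ)

open Equiv Relation

section Window

variable {n K : ℕ}

def windowEquiv (i : ℕ) (h : i + K ≤ n) : Fin K ≃ {x : Fin n // i ≤ x.val ∧ x.val < i + K} where
  toFun a := ⟨⟨i + a, by omega⟩, by simp⟩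
  invFun x := ⟨x.1 - i, by omega⟩
  left_inv a := by ext; simp
  right_inv x := by ext; simp; omega

def windowPerm (i : ℕ) (h : i + K ≤ n) : Perm (Fin K) →* Perm (Fin n) :=
  Perm.extendDomainHom (windowEquiv i h)

variable {i : ℕ} {h : i + K ≤ n}

theorem windowPerm_apply_add (ρ : Perm (Fin K)) (a : Fin K) :
    windowPerm i h ρ ⟨i + a, by omega⟩ = ⟨i + ρ a, by omega⟩ :=
  Perm.extendDomain_apply_image ρ (windowEquiv i h) a

theorem windowPerm_apply_of_notMem (ρ : Perm (Fin K)) {x : Fin n}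
    (hx : x.val < i ∨ i + K ≤ x.val) : windowPerm i h ρ x = x :=
  Perm.extendDomain_apply_not_subtype ρ (windowEquiv i h) (by omega)

theorem mul_windowPerm_mul (w : Perm (Fin n)) (ρ τ : Perm (Fin K)) :
    w * windowPerm i h ρ * windowPerm i h τ = w * windowPerm i h (ρ * τ) := by
  rw [mul_assoc, map_mul]

theorem exists_eq_mul_windowPerm {w w' : Perm (Fin n)}
    (hww' : ∀ x : Fin n, (x.val < i ∨ i + K ≤ x.val) → w x = w' x) :
    ∃ ρ : Perm (Fin K), w' = w * windowPerm i h ρ := by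
  set π := w⁻¹ * w'
  have hπ : ∀ x : Fin n, (x.val < i ∨ i + K ≤ x.val) → π x = x := fun x hx => by
    simp [π, ← hww' x hx]
  have hπ_window : ∀ x, (i ≤ (π x).val ∧ (π x).val < i + K) ↔ (i ≤ x.val ∧ x.val < i + K) := by
    intro x
    by_cases hx : x.val < i ∨ i + K ≤ x.val
    · rw [hπ x hx]
    · have : ¬((π x).val < i ∨ i + K ≤ (π x).val) := fun hπx =>
        hx (π.injective (hπ _ hπx) ▸ hπx)
      exact iff_of_true (by omega) (by omega)
  refine ⟨(windowEquiv i h).permCongr.symm (π.subtypePerm hπ_window), ?_⟩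
  suffices windowPerm i h _ = π by rw [this, mul_inv_cancel_left]
  ext x : 1
  by_cases hx : x.val < i ∨ i + K ≤ x.val
  · rw [windowPerm_apply_of_notMem _ hx, hπ x hx]
  · obtain ⟨a, rfl⟩ : ∃ a : Fin K, (windowEquiv i h a).val = x :=
      ⟨(windowEquiv i h).symm ⟨x, by omega⟩, by simp⟩
    simp [windowPerm, Perm.extendDomain_apply_image]

end Window

section Pattern

variable {n k : ℕ} {i : ℕ} {h : i + k ≤ n} {w : Perm (Fin n)}

theorem exists_patternAt (w : Perm (Fin n)) (i : ℕ) (h : i + k ≤ n) :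
    ∃ σ : Perm (Fin k), PatternAt w i h σ := by
  set f : Fin k → Fin n := fun a => w ⟨i + a, by omega⟩
  have hf : Function.Injective f := fun a b hab => by
    simpa [f, Fin.ext_iff] using hab
  have hsorted : StrictMono (f ∘ Tuple.sort f) :=
    (Tuple.monotone_sort f).strictMono_of_injective (hf.comp (Tuple.sort f).injective)
  refine ⟨(Tuple.sort f)⁻¹, fun a b => ?_⟩
  simpa using (hsorted.lt_iff_lt (a := (Tuple.sort f)⁻¹ a) (b := (Tuple.sort f)⁻¹ b)).symm

theorem PatternAt.unique {σ τ : Perm (Fin k)} (hσ : PatternAt w i h σ)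
    (hτ : PatternAt w i h τ) : σ = τ := by
  let e : Fin k ≃o Fin k :=
    { σ.symm.trans τ with
      map_rel_iff' := fun {a b} => by
        simp only [Equiv.trans_apply, ← not_lt]
        rw [hτ, ← hσ, Equiv.apply_symm_apply, Equiv.apply_symm_apply] }
  ext a : 1
  simpa [e] using congrArg (· (σ a)) (Subsingleton.elim (OrderIso.refl _) e)

theorem PatternAt.mul_windowPerm {σ : Perm (Fin k)} (hσ : PatternAt w i h σ)
    (ρ : Perm (Fin k)) : PatternAt (w * windowPerm i h ρ) i h (σ * ρ) := by
  intro a b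
  simp only [Perm.mul_apply, windowPerm_apply_add]
  exact hσ (ρ a) (ρ b)

theorem PatternAt.patternAt_add_iff {K j : ℕ} {h : i + K ≤ n} {u : Perm (Fin K)}
    (hu : PatternAt w i h u) (hj : j + k ≤ K) {σ : Perm (Fin k)} :
    PatternAt u j hj σ ↔ PatternAt w (i + j) (by omega) σ := by
  unfold PatternAt at hu ⊢
  simp only [hu, Nat.add_assoc]

end Pattern

section Step

variable {c n : ℕ} (P : Set (Set (Perm (Fin c))))

def StepAt (j : ℕ) (hj : j + c ≤ n) (w w' : Perm (Fin n)) : Prop :=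
  ∃ Q ∈ P, (∀ x : Fin n, (x.val < j ∨ j + c ≤ x.val) → w x = w' x) ∧
    (∃ σ ∈ Q, PatternAt w j hj σ) ∧ (∃ τ ∈ Q, PatternAt w' j hj τ)

variable {P}

theorem stepK_iff_exists_stepAt {w w' : Perm (Fin n)} :
    StepK P w w' ↔ ∃ j hj, StepAt P j hj w w' :=
  ⟨fun ⟨Q, hQ, j, hj, hs⟩ => ⟨j, hj, Q, hQ, hs⟩, fun ⟨j, hj, Q, hQ, hs⟩ => ⟨Q, hQ, j, hj, hs⟩⟩

theorem windowPerm_eq_self_iff {K i j : ℕ} {h : i + K ≤ n} (ρ : Perm (Fin K)) :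
    (∀ x : Fin n, (x.val < i + j ∨ i + j + c ≤ x.val) → windowPerm i h ρ x = x) ↔
      ∀ a : Fin K, (a.val < j ∨ j + c ≤ a.val) → ρ a = a := by
  constructor
  · intro hρ a ha
    have := hρ ⟨i + a, by omega⟩ (by simp only; omega)
    rw [windowPerm_apply_add, Fin.mk.injEq] at this
    exact Fin.ext (by omega)
  · intro hρ x hx
    by_cases hxK : x.val < i ∨ i + K ≤ x.val
    · exact windowPerm_apply_of_notMem ρ hxK
    · obtain ⟨a, ha⟩ : ∃ a : Fin K, x = ⟨i + a, by omega⟩ :=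
        ⟨⟨x - i, by omega⟩, Fin.ext (by simp only; omega)⟩
      have hxa : x.val = i + a := congrArg Fin.val ha
      simp only [ha, windowPerm_apply_add, hρ a (by omega)]

theorem PatternAt.stepAt_mul_windowPerm_iff {K i j : ℕ} {h : i + K ≤ n} {w : Perm (Fin n)}
    {u : Perm (Fin K)} (hu : PatternAt w i h u) (hj : j + c ≤ K) (ρ : Perm (Fin K)) :
    StepAt P (i + j) (by omega) w (w * windowPerm i h ρ) ↔ StepAt P j hj u (u * ρ) := by
  have hagree : ∀ {m : ℕ} (v : Perm (Fin m)) (π : Perm (Fin m)) (x : Fin m),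
      v x = (v * π) x ↔ π x = x := fun v π x => v.injective.eq_iff.trans eq_comm
  simp only [StepAt, hagree, windowPerm_eq_self_iff, hu.patternAt_add_iff hj,
    (hu.mul_windowPerm ρ).patternAt_add_iff hj]

theorem PatternAt.eqvGen_stepK_mul_windowPerm {K i : ℕ} {h : i + K ≤ n} {w : Perm (Fin n)}
    {u ρ : Perm (Fin K)} (hu : PatternAt w i h u) (huρ : EqvGen (StepK P) u (u * ρ)) :
    EqvGen (StepK P) w (w * windowPerm i h ρ) := by
  suffices H : ∀ a b, EqvGen (StepK P) a b → ∀ w : Perm (Fin n), PatternAt w i h a →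
      EqvGen (StepK P) w (w * windowPerm i h (a⁻¹ * b)) by
    simpa only [inv_mul_cancel_left] using H u (u * ρ) huρ w hu
  intro a b hab
  induction hab with
  | rel a b hab =>
    intro w hw
    obtain ⟨j, hj, hstep⟩ := stepK_iff_exists_stepAt.1 hab
    rw [← mul_inv_cancel_left a b] at hstep
    exact EqvGen.rel _ _ (stepK_iff_exists_stepAt.2
      ⟨i + j, _, (hw.stepAt_mul_windowPerm_iff hj _).2 hstep⟩)
  | refl a =>
    intro w _
    rw [inv_mul_cancel, map_one, mul_one]
    exact EqvGen.refl w
  | symm a b _ ih =>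
    intro w hw
    have hw' := hw.mul_windowPerm (b⁻¹ * a)
    rw [mul_inv_cancel_left] at hw'
    have := ih _ hw'
    rw [mul_windowPerm_mul, mul_assoc, mul_inv_cancel_left, inv_mul_cancel, map_one,
      mul_one] at this
    exact this.symm
  | trans a b d _ _ ih₁ ih₂ =>
    intro w hw
    have hw' := hw.mul_windowPerm (a⁻¹ * b)
    rw [mul_inv_cancel_left] at hw'
    have h₂ := ih₂ _ hw'
    rw [mul_windowPerm_mul, mul_assoc, mul_inv_cancel_left] at h₂
    exact (ih₁ w hw).trans _ _ _ h₂

def inducedPartition (P : Set (Set (Perm (Fin c)))) (K : ℕ) : Set (Set (Perm (Fin K))) :=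
  {C | ∃ u : Perm (Fin K), C = {v | EqvGen (StepK P) u v}}

theorem stepK_inducedPartition_of_stepK {K : ℕ} (hcK : c ≤ K) (hKn : K ≤ n) {w w' : Perm (Fin n)}
    (hs : StepK P w w') : StepK (inducedPartition P K) w w' := by
  obtain ⟨j₀, _, hstep⟩ := stepK_iff_exists_stepAt.1 hs
  obtain ⟨i, j, rfl, hj, h⟩ : ∃ i j, j₀ = i + j ∧ j + c ≤ K ∧ i + K ≤ n :=
    ⟨min j₀ (n - K), j₀ - min j₀ (n - K), by omega, by omega, by omega⟩
  obtain ⟨ρ, rfl⟩ : ∃ ρ : Perm (Fin K), w' = w * windowPerm i h ρ := by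
    obtain ⟨-, -, hagree, -⟩ := hstep
    exact exists_eq_mul_windowPerm fun x hx => hagree x (by omega)
  obtain ⟨u, hu⟩ := exists_patternAt w i h
  have huρ : StepK P u (u * ρ) :=
    stepK_iff_exists_stepAt.2 ⟨j, hj, (hu.stepAt_mul_windowPerm_iff hj ρ).1 hstep⟩
  exact ⟨_, ⟨u, rfl⟩, i, h, fun x hx => by rw [Perm.mul_apply, windowPerm_apply_of_notMem ρ hx],
    ⟨u, EqvGen.refl u, hu⟩, ⟨u * ρ, EqvGen.rel _ _ huρ, hu.mul_windowPerm ρ⟩⟩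

theorem eqvGen_stepK_of_stepK_inducedPartition {K : ℕ} {w w' : Perm (Fin n)}
    (hs : StepK (inducedPartition P K) w w') : EqvGen (StepK P) w w' := by
  obtain ⟨_, ⟨x, rfl⟩, i, h, hagree, ⟨u, hxu, hu⟩, ⟨v, hxv, hv⟩⟩ := hs
  obtain ⟨ρ, rfl⟩ := exists_eq_mul_windowPerm (h := h) hagree
  obtain rfl : v = u * ρ := hv.unique (hu.mul_windowPerm ρ)
  exact hu.eqvGen_stepK_mul_windowPerm ((EqvGen.symm _ _ hxu).trans _ _ _ hxv)

theorem eqvGen_stepK_inducedPartition_iff {K : ℕ} (hcK : c ≤ K) (hKn : K ≤ n)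
    {w w' : Perm (Fin n)} :
    EqvGen (StepK (inducedPartition P K)) w w' ↔ EqvGen (StepK P) w w' :=
  ⟨EqvGen.eqvGen_le (fun _ _ => eqvGen_stepK_of_stepK_inducedPartition) _ _,
    EqvGen.mono (fun _ _ => stepK_inducedPartition_of_stepK hcK hKn) _ _⟩

end Step

theorem stmt13_general (c : ℕ) (P : Set (Set (Equiv.Perm (Fin c))))
    (P' : Set (Set (Equiv.Perm (Fin (c + 1)))))
    (hP' : P' = {C | ∃ w : Equiv.Perm (Fin (c + 1)),
      C = {v | Relation.EqvGen (StepK P) w v}})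
    (n : ℕ) (hn : c + 1 ≤ n) (w w' : Equiv.Perm (Fin n)) :
    Relation.EqvGen (StepK P) w w' ↔ Relation.EqvGen (StepK P') w w' := by
  subst hP'
  exact (eqvGen_stepK_inducedPartition_iff (Nat.le_succ c) hn).symm

/-- if `P` is a set partition of `S_c` and `P'` is the partition of
`S_{c+1}` into equivalence classes of the `P`-equivalence, then for every `n ≥ c + 1`
the `P`-equivalence and the `P'`-equivalence on `S_n` coincide. -/
theorem stmt13 (c : ℕ) (P : Set (Set (Equiv.Perm (Fin c)))) (hP : Setoid.IsPartition P)
    (P' : Set (Set (Equiv.Perm (Fin (c + 1)))))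
    (hP' : P' = {C | ∃ w : Equiv.Perm (Fin (c + 1)),
      C = {v | Relation.EqvGen (StepK P) w v}})
    (n : ℕ) (hn : c + 1 ≤ n) (w w' : Equiv.Perm (Fin n)) :
    Relation.EqvGen (StepK P) w w' ↔ Relation.EqvGen (StepK P') w w' :=
  stmt13_general c P P' hP' n hn w w'
end

section
/- For n ≥ 3, the number of equivalence classes of S_n under the equivalence generated by making all factors of three adjacent letters with order patterns in {123, 132, 213, 231} interchangeable is exactly n. -/
/-!
Write permutations in one-line notation. The invariant of a class is the length `k` of the
longest prefix each of whose letters is the maximum of the suffix it starts, i.e. the word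
begins with its `k` largest letters in decreasing order. A move never touches this prefix, because a factor starting
inside it would start with its own maximum; and the run cannot stop exactly one letter before
the end, so `k ∈ {0, …, n} \ {n-1}`, each value being attained.

Conversely, after this prefix two words with the same `k` continue with the same letters in
an order not starting with their maximum `M`, and any two such orders are connected: moves
`z M y ↦ z y M` carry `M` to the end, and if the remaining word then starts with its own
maximum `a`, bringing `M` back behind `a` and applying `a M b ↦ b a M` repairs this, after
which induction on the length applies.
-/

namespace List

def HeadNotMax : List ℕ → Prop
  | [] => False
  | a :: l => ∃ b ∈ l, a < b

def TriStep (l l' : List ℕ) : Prop :=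
  ∃ p t t' s, l = p ++ t ++ s ∧ l' = p ++ t' ++ s ∧ t.length = 3 ∧ t ~ t' ∧
    t.HeadNotMax ∧ t'.HeadNotMax

def leadingMaxRun : List ℕ → ℕ
  | [] => 0
  | a :: l => if ∀ b ∈ l, b ≤ a then l.leadingMaxRun + 1 else 0

local infix:50 " ≈₃ " => Relation.EqvGen TriStep

theorem headNotMax_cons {a : ℕ} {l : List ℕ} : (a :: l).HeadNotMax ↔ ∃ b ∈ l, a < b := Iff.rfl

theorem TriStep.perm {l l' : List ℕ} (h : TriStep l l') : l ~ l' := by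
  obtain ⟨p, t, t', s, rfl, rfl, -, hperm, -⟩ := h
  exact (hperm.append_left p).append_right s

theorem TriStep.append_append {l l' : List ℕ} (h : TriStep l l') (p s : List ℕ) :
    TriStep (p ++ l ++ s) (p ++ l' ++ s) := by
  obtain ⟨q, t, t', r, rfl, rfl, h⟩ := h
  exact ⟨p ++ q, t, t', r ++ s, by simp, by simp, h⟩

theorem triEquiv_perm {l l' : List ℕ} (h : l ≈₃ l') : l ~ l' := by
  induction h with
  | rel _ _ h => exact h.perm
  | refl => rfl
  | symm _ _ _ ih => exact ih.symm
  | trans _ _ _ _ _ ih ih' => exact ih.trans ih'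

theorem triEquiv_append_append {l l' : List ℕ} (h : l ≈₃ l') (p s : List ℕ) :
    (p ++ l ++ s) ≈₃ (p ++ l' ++ s) := by
  induction h with
  | rel _ _ h => exact .rel _ _ (h.append_append p s)
  | refl => exact .refl _
  | symm _ _ _ ih => exact ih.symm
  | trans _ _ _ _ _ ih ih' => exact ih.trans _ _ _ ih'

theorem triEquiv_cons {l l' : List ℕ} (h : l ≈₃ l') (a : ℕ) : (a :: l) ≈₃ (a :: l') := by
  simpa using triEquiv_append_append h [a] []

theorem triEquiv_append_right {l l' : List ℕ} (h : l ≈₃ l') (s : List ℕ) :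
    (l ++ s) ≈₃ (l' ++ s) := by
  simpa using triEquiv_append_append h [] s

theorem triEquiv_max_to_end {z M : ℕ} {l : List ℕ} (hM : ∀ x ∈ z :: l, x < M) :
    (z :: M :: l) ≈₃ (z :: (l ++ [M])) := by
  induction l generalizing z with
  | nil => exact .refl _
  | cons y l ih =>
    have hstep : TriStep (z :: M :: y :: l) (z :: y :: M :: l) :=
      ⟨[], [z, M, y], [z, y, M], l, rfl, rfl, rfl, .cons z (.swap y M []),
        ⟨M, by simp, hM z (by simp)⟩, ⟨M, by simp, hM z (by simp)⟩⟩
    refine (Relation.EqvGen.rel _ _ hstep).trans _ _ _ (triEquiv_cons (ih ?_) z)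
    intro x hx
    exact hM x (mem_cons_of_mem _ hx)

theorem triEquiv_move_max_to_end {z M : ℕ} {u v : List ℕ} (hM : ∀ x ∈ z :: (u ++ v), x < M) :
    (z :: (u ++ M :: v)) ≈₃ (z :: (u ++ v ++ [M])) := by
  induction u generalizing z with
  | nil => exact triEquiv_max_to_end hM
  | cons y u ih =>
    exact triEquiv_cons (ih fun x hx => hM x (by simp_all)) z

theorem triEquiv_swap_head {a b M : ℕ} {l : List ℕ} (hM : ∀ x ∈ a :: b :: l, x < M) :
    (a :: b :: (l ++ [M])) ≈₃ (b :: a :: (l ++ [M])) := by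
  have hstep : TriStep (a :: M :: b :: l) (b :: a :: M :: l) :=
    ⟨[], [a, M, b], [b, a, M], l, rfl, rfl, rfl,
      by simpa using perm_middle (a := b) (l₁ := [a, M]) (l₂ := []),
      ⟨M, by simp, hM a (by simp)⟩, ⟨M, by simp, hM b (by simp)⟩⟩
  calc (a :: b :: (l ++ [M])) ≈₃ (a :: M :: b :: l) := (triEquiv_max_to_end hM).symm
    _ ≈₃ (b :: a :: M :: l) := .rel _ _ hstep
    _ ≈₃ (b :: a :: (l ++ [M])) :=
      triEquiv_cons (triEquiv_max_to_end fun x hx => hM x (by simp at hx ⊢; tauto)) b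

theorem exists_triEquiv_append_max {l : List ℕ} {M : ℕ} (hnd : l.Nodup) (hl : l.HeadNotMax)
    (hlen : 3 ≤ l.length) (hM : M ∈ l) (hmax : ∀ x ∈ l, x ≤ M) :
    ∃ c, l ≈₃ (c ++ [M]) ∧ c.HeadNotMax := by
  obtain _ | ⟨a, r⟩ := l
  · exact hl.elim
  obtain ⟨b, hb, hab⟩ := hl
  have hMr : M ∈ r := by
    rcases mem_cons.mp hM with rfl | h
    · exact absurd (hmax b (mem_cons_of_mem _ hb)) (by omega)
    · exact h
  obtain ⟨u, v, rfl⟩ := append_of_mem hMr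
  have hnd' : (M :: a :: (u ++ v)).Nodup :=
    ((perm_middle.cons a).trans (.swap M a _)).nodup_iff.mp hnd
  have hlt : ∀ x ∈ a :: (u ++ v), x < M := fun x hx =>
    lt_of_le_of_ne (hmax x (by simp at hx ⊢; tauto))
      (by rintro rfl; exact (nodup_cons.mp hnd').1 hx)
  have hmove := triEquiv_move_max_to_end hlt
  by_cases hgood : (a :: (u ++ v)).HeadNotMax
  · exact ⟨a :: (u ++ v), hmove, hgood⟩
  obtain ⟨b', w, hw⟩ : ∃ b' w, u ++ v = b' :: w :=
    exists_cons_of_ne_nil (by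
      intro h
      have := congrArg length h
      simp only [length_append, length_nil] at this
      simp at hlen
      omega)
  rw [hw] at hmove hlt hgood hnd'
  have hb'a : b' < a := by
    simp only [headNotMax_cons, mem_cons, not_exists, not_and, not_lt] at hgood
    refine lt_of_le_of_ne (hgood b' (.inl rfl)) ?_
    rintro rfl
    simp at hnd'
  exact ⟨b' :: a :: w, hmove.trans _ _ _ (triEquiv_swap_head hlt), a, by simp, hb'a⟩

theorem triEquiv_of_perm_of_headNotMax {l l' : List ℕ} (hnd : l.Nodup) (hperm : l ~ l')
    (hl : l.HeadNotMax) (hl' : l'.HeadNotMax) : l ≈₃ l' := by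
  induction h : l.length using Nat.strong_induction_on generalizing l l' with
  | _ m ih =>
  match l, l', hperm.length_eq with
  | [], _, _ => exact hl.elim
  | [_], _, _ => simp [HeadNotMax] at hl
  | [a, b], [a', b'], _ =>
    have hsorted : ∀ x y : ℕ, [x, y].HeadNotMax → [x, y].Pairwise (· ≤ ·) := by
      simp only [headNotMax_cons]; simp; omega
    rw [hperm.eq_of_pairwise (fun _ _ _ _ => le_antisymm) (hsorted _ _ hl) (hsorted _ _ hl')]
    exact .refl _
  | a :: b :: c :: r, l', _ =>
    set l := a :: b :: c :: r
    obtain ⟨M, hM, hmax⟩ := l.toFinset.exists_max_image id ⟨a, by simp [l]⟩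
    simp only [mem_toFinset, id] at hM hmax
    obtain ⟨c, hlc, hc⟩ := exists_triEquiv_append_max hnd hl (by simp [l]) hM hmax
    obtain ⟨c', hlc', hc'⟩ := exists_triEquiv_append_max (hperm.nodup_iff.mp hnd) hl'
      (by simp [← hperm.length_eq, l]) (hperm.mem_iff.mp hM)
      (fun x hx => hmax x (hperm.mem_iff.mpr hx))
    have hcc' : c ~ c' := (perm_append_right_iff [M]).mp
      ((triEquiv_perm hlc).symm.trans (hperm.trans (triEquiv_perm hlc')))
    have hcnd : (c ++ [M]).Nodup := (triEquiv_perm hlc).nodup_iff.mp hnd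
    have hclen : c.length < m := by
      have := (triEquiv_perm hlc).length_eq; simp at this; omega
    exact hlc.trans _ _ _ ((triEquiv_append_right
      (ih c.length hclen (nodup_append.mp hcnd).1 hcc' hc hc' rfl) [M]).trans _ _ _
      hlc'.symm)

theorem leadingMaxRun_cons {a : ℕ} {l : List ℕ} :
    (a :: l).leadingMaxRun = if ∀ b ∈ l, b ≤ a then l.leadingMaxRun + 1 else 0 := rfl

theorem leadingMaxRun_cons_eq_zero_iff {a : ℕ} {l : List ℕ} :
    (a :: l).leadingMaxRun = 0 ↔ (a :: l).HeadNotMax := by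
  simp [leadingMaxRun_cons, headNotMax_cons]

theorem HeadNotMax.leadingMaxRun_append {t : List ℕ} (ht : t.HeadNotMax) (s : List ℕ) :
    (t ++ s).leadingMaxRun = 0 := by
  obtain _ | ⟨a, r⟩ := t
  · exact ht.elim
  obtain ⟨b, hb, hab⟩ := ht
  exact leadingMaxRun_cons_eq_zero_iff.mpr ⟨b, mem_append_left s hb, hab⟩

theorem TriStep.leadingMaxRun_eq {l l' : List ℕ} (h : TriStep l l') :
    l.leadingMaxRun = l'.leadingMaxRun := by
  obtain ⟨p, t, t', s, rfl, rfl, -, hperm, ht, ht'⟩ := h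
  induction p with
  | nil => simp only [nil_append, ht.leadingMaxRun_append, ht'.leadingMaxRun_append]
  | cons a p ih =>
    have hmem : ∀ b, b ∈ p ++ t ++ s ↔ b ∈ p ++ t' ++ s := fun b =>
      ((hperm.append_left p).append_right s).mem_iff
    simp only [cons_append, leadingMaxRun_cons, hmem, ih]

theorem triEquiv_of_leadingMaxRun_eq {l l' : List ℕ} (hnd : l.Nodup) (hperm : l ~ l')
    (hrun : l.leadingMaxRun = l'.leadingMaxRun) : l ≈₃ l' := by
  induction l generalizing l' with
  | nil => rw [perm_nil.mp hperm.symm]; exact .refl _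
  | cons a r ih =>
    obtain _ | ⟨a', r'⟩ := l'
    · exact absurd hperm.length_eq (by simp)
    by_cases ha : ∀ b ∈ r, b ≤ a
    · have ha' : ∀ b ∈ r', b ≤ a' := by
        by_contra ha'
        simp only [leadingMaxRun_cons, if_pos ha, if_neg ha'] at hrun
        omega
      have hle : ∀ {x y : ℕ} {s s' : List ℕ}, x :: s ~ y :: s' → (∀ b ∈ s', b ≤ y) → x ≤ y :=
        fun h hy => (mem_cons.mp (h.mem_iff.mp mem_cons_self)).elim le_of_eq (hy _)
      obtain rfl : a = a' := le_antisymm (hle hperm ha') (hle hperm.symm ha)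
      simp only [leadingMaxRun_cons, if_pos ha, if_pos ha', Nat.add_right_cancel_iff] at hrun
      exact triEquiv_cons (ih (nodup_cons.mp hnd).2 hperm.cons_inv hrun) a
    · have hzero : (a :: r).leadingMaxRun = 0 := by simp [leadingMaxRun_cons, ha]
      exact triEquiv_of_perm_of_headNotMax hnd hperm (leadingMaxRun_cons_eq_zero_iff.mp hzero)
        (leadingMaxRun_cons_eq_zero_iff.mp (hrun ▸ hzero))

theorem leadingMaxRun_le_length (l : List ℕ) : l.leadingMaxRun ≤ l.length := by
  induction l with
  | nil => exact le_rfl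
  | cons a l ih => rw [leadingMaxRun_cons]; split_ifs <;> simp [ih]

/-- A last letter alone is always a maximum of its suffix, so the run never stops just
before the end. -/
theorem leadingMaxRun_add_one_ne_length (l : List ℕ) : l.leadingMaxRun + 1 ≠ l.length := by
  induction l with
  | nil => simp [leadingMaxRun]
  | cons a l ih =>
    rw [leadingMaxRun_cons]
    split_ifs with h
    · simpa using ih
    · obtain _ | ⟨b, l⟩ := l
      · simp at h
      · simp

theorem leadingMaxRun_append {p s : List ℕ} (hp : p.Pairwise (· ≥ ·))
    (hps : ∀ a ∈ p, ∀ b ∈ s, b ≤ a) :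
    (p ++ s).leadingMaxRun = p.length + s.leadingMaxRun := by
  induction p with
  | nil => simp
  | cons a p ih =>
    obtain ⟨ha, hp⟩ := pairwise_cons.mp hp
    have hmax : ∀ b ∈ p ++ s, b ≤ a := by
      intro b hb
      rcases mem_append.mp hb with hb | hb
      exacts [ha b hb, hps a mem_cons_self b hb]
    rw [cons_append, leadingMaxRun_cons, if_pos hmax,
      ih hp fun x hx => hps x (mem_cons_of_mem a hx)]
    simp only [length_cons]
    omega

theorem leadingMaxRun_range {m : ℕ} (hm : m ≠ 1) : (range m).leadingMaxRun = 0 := by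
  obtain _ | _ | m := m
  · rfl
  · exact absurd rfl hm
  · rw [range_succ_eq_map]
    exact leadingMaxRun_cons_eq_zero_iff.mpr ⟨1, by simp, one_pos⟩

end List

def nonMaxFirstPats : Set Pat := {p123, p132, p213, p231}

theorem exists_mem_nonMaxFirstPats_iff {x y z : ℕ} (hxy : x ≠ y) (hxz : x ≠ z) (hyz : y ≠ z) :
    (∃ p ∈ nonMaxFirstPats, p x y z) ↔ [x, y, z].HeadNotMax := by
  simp only [nonMaxFirstPats, List.headNotMax_cons, Set.mem_insert_iff, Set.mem_singleton_iff,
    exists_eq_or_imp, exists_eq_left, p123, p132, p213, p231, List.mem_cons, List.mem_nil_iff,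
    or_false, exists_eq_or_imp, exists_eq_left]
  omega

variable {n : ℕ}

def oneLine (w : Equiv.Perm (Fin n)) : List ℕ := List.ofFn fun i => (w i : ℕ)

theorem getElem?_oneLine (w : Equiv.Perm (Fin n)) (j : Fin n) :
    (oneLine w)[(j : ℕ)]? = some (w j : ℕ) := by
  simp [oneLine]

theorem length_oneLine (w : Equiv.Perm (Fin n)) : (oneLine w).length = n := by
  simp [oneLine]

theorem oneLine_injective : Function.Injective (oneLine (n := n)) := fun w w' h =>
  Equiv.ext fun j => Fin.ext (Option.some.inj ((getElem?_oneLine w j).symm.trans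
    (h ▸ getElem?_oneLine w' j)))

theorem nodup_oneLine (w : Equiv.Perm (Fin n)) : (oneLine w).Nodup :=
  List.nodup_ofFn.mpr (Fin.val_injective.comp w.injective)

theorem oneLine_perm_range (w : Equiv.Perm (Fin n)) : (oneLine w).Perm (List.range n) := by
  refine (List.perm_ext_iff_of_nodup (nodup_oneLine w) List.nodup_range).mpr fun x => ?_
  simp only [oneLine, List.mem_ofFn, List.mem_range]
  exact ⟨fun ⟨j, hj⟩ => hj ▸ (w j).isLt, fun hx => ⟨w.symm ⟨x, hx⟩, by simp⟩⟩

theorem exists_oneLine_eq {l : List ℕ} (hl : l.Perm (List.range n)) :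
    ∃ w : Equiv.Perm (Fin n), oneLine w = l := by
  have hlen : l.length = n := by simpa using hl.length_eq
  let f : Fin n → Fin n := fun i => ⟨l[i.val], by
    simpa using hl.mem_iff.mp (List.getElem_mem (by omega))⟩
  have hf : Function.Injective f := fun i j hij =>
    Fin.ext ((hl.nodup_iff.mpr List.nodup_range).getElem_inj_iff.mp (Fin.ext_iff.mp hij))
  refine ⟨Equiv.ofBijective f (Finite.injective_iff_bijective.mp hf), ?_⟩
  subst hlen
  exact List.ofFn_getElem

theorem val_apply_ne (w : Equiv.Perm (Fin n)) {j k : Fin n} (h : j ≠ k) : (w j : ℕ) ≠ w k :=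
  fun e => h (w.injective (Fin.ext e))

theorem take_three_drop_oneLine (w : Equiv.Perm (Fin n)) {i : ℕ} (hi : i + 3 ≤ n) :
    ((oneLine w).drop i).take 3 =
      [(w ⟨i, by omega⟩ : ℕ), (w ⟨i + 1, by omega⟩ : ℕ), (w ⟨i + 2, by omega⟩ : ℕ)] := by
  refine List.ext_getElem? fun j => ?_
  rcases j with _ | _ | _ | j <;> simp [oneLine, List.getElem?_ofFn] <;> omega

theorem exists_patAt_iff_headNotMax (w : Equiv.Perm (Fin n)) {i : ℕ} (hi : i + 3 ≤ n) :
    (∃ q ∈ nonMaxFirstPats, PatAt w i hi q) ↔ (((oneLine w).drop i).take 3).HeadNotMax := by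
  rw [take_three_drop_oneLine w hi]
  exact exists_mem_nonMaxFirstPats_iff (val_apply_ne w (by simp)) (val_apply_ne w (by simp))
    (val_apply_ne w (by simp))

theorem triStep_of_step3 {w w' : Equiv.Perm (Fin n)} (h : Step3 {nonMaxFirstPats} w w') :
    List.TriStep (oneLine w) (oneLine w') := by
  obtain ⟨Q, hQ, i, hi, hagree, ⟨p, hp, hpat⟩, ⟨q, hq, hqat⟩⟩ := h
  rw [Set.mem_singleton_iff] at hQ
  subst hQ
  have hagree' : ∀ j, j < i ∨ i + 3 ≤ j → (oneLine w)[j]? = (oneLine w')[j]? := by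
    intro j hj
    by_cases hjn : j < n
    · simp only [getElem?_oneLine w ⟨j, hjn⟩, getElem?_oneLine w' ⟨j, hjn⟩, hagree ⟨j, hjn⟩ hj]
    · simp [length_oneLine, hjn]
  have hsplit : ∀ l : List ℕ, l = l.take i ++ (l.drop i).take 3 ++ l.drop (i + 3) := by
    intro l
    rw [List.append_assoc, ← List.drop_drop, List.take_append_drop, List.take_append_drop]
  have htake : (oneLine w).take i = (oneLine w').take i := List.ext_getElem? fun j => by
    simp only [List.getElem?_take]
    split_ifs with hj
    exacts [hagree' j (.inl hj), rfl]
  have hdrop : (oneLine w).drop (i + 3) = (oneLine w').drop (i + 3) :=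
    List.ext_getElem? fun j => by simpa only [List.getElem?_drop] using hagree' _ (.inr (by omega))
  have hw := hsplit (oneLine w)
  have hw' := hsplit (oneLine w')
  rw [← htake, ← hdrop] at hw'
  refine ⟨_, _, _, _, hw, hw', by simp [take_three_drop_oneLine w hi], ?_, ?_, ?_⟩
  · have := ((oneLine_perm_range w).trans (oneLine_perm_range w').symm)
    rw [hw, hw'] at this
    exact (List.perm_append_left_iff _).mp ((List.perm_append_right_iff _).mp this)
  exacts [(exists_patAt_iff_headNotMax w hi).mp ⟨p, hp, hpat⟩,
    (exists_patAt_iff_headNotMax w' hi).mp ⟨q, hq, hqat⟩]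

theorem step3_of_triStep {w w' : Equiv.Perm (Fin n)} (h : List.TriStep (oneLine w) (oneLine w')) :
    Step3 {nonMaxFirstPats} w w' := by
  obtain ⟨p, t, t', s, hw, hw', ht3, hperm, ht, ht'⟩ := h
  have hi : p.length + 3 ≤ n := by
    have := congrArg List.length hw
    simp only [length_oneLine, List.length_append, ht3] at this
    omega
  have ht3' : t'.length = 3 := hperm.length_eq ▸ ht3
  have hwin : ∀ v : Equiv.Perm (Fin n), ∀ u, oneLine v = p ++ u ++ s → u.length = 3 →
      ((oneLine v).drop p.length).take 3 = u := by
    intro v u hv hu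
    simp [hv, hu]
  refine ⟨_, rfl, p.length, hi, fun j hj => ?_,
    (exists_patAt_iff_headNotMax w hi).mpr ((hwin w t hw ht3).symm ▸ ht),
    (exists_patAt_iff_headNotMax w' hi).mpr ((hwin w' t' hw' ht3').symm ▸ ht')⟩
  refine Fin.ext (Option.some.inj ?_)
  rw [← getElem?_oneLine, ← getElem?_oneLine, hw, hw']
  rcases hj with hj | hj
  · simp [List.getElem?_append_left, hj]
  · rw [List.getElem?_append_right (by simp; omega), List.getElem?_append_right (by simp; omega)]
    simp [ht3, ht3']

theorem pattEquiv_of_triEquiv {w w' : Equiv.Perm (Fin n)}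
    (h : Relation.EqvGen List.TriStep (oneLine w) (oneLine w')) :
    PattEquiv {nonMaxFirstPats} w w' := by
  suffices ∀ l l', Relation.EqvGen List.TriStep l l' → ∀ w w' : Equiv.Perm (Fin n),
      oneLine w = l → oneLine w' = l' → PattEquiv {nonMaxFirstPats} w w' from
    this _ _ h w w' rfl rfl
  intro l l' h
  induction h with
  | rel _ _ h => rintro w w' rfl rfl; exact .rel _ _ (step3_of_triStep h)
  | refl => rintro w w' rfl h; rw [oneLine_injective h]; exact .refl _
  | symm _ _ _ ih => exact fun w w' hw hw' => (ih w' w hw' hw).symm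
  | trans _ l'' _ h _ ih ih' =>
    rintro w w' rfl hw'
    obtain ⟨w'', rfl⟩ :=
      exists_oneLine_eq ((List.triEquiv_perm h).symm.trans (oneLine_perm_range w))
    exact (ih w w'' rfl rfl).trans _ _ _ (ih' w'' w' rfl hw')

theorem pattEquiv_iff_leadingMaxRun_eq {w w' : Equiv.Perm (Fin n)} :
    PattEquiv {nonMaxFirstPats} w w' ↔
      (oneLine w).leadingMaxRun = (oneLine w').leadingMaxRun := by
  refine ⟨fun h => ?_, fun h => pattEquiv_of_triEquiv (List.triEquiv_of_leadingMaxRun_eq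
    (nodup_oneLine w) ((oneLine_perm_range w).trans (oneLine_perm_range w').symm) h)⟩
  induction h with
  | rel _ _ h => exact (triStep_of_step3 h).leadingMaxRun_eq
  | refl => rfl
  | symm _ _ _ ih => exact ih.symm
  | trans _ _ _ _ _ ih ih' => exact ih.trans ih'

theorem range_leadingMaxRun_oneLine :
    Set.range (fun w : Equiv.Perm (Fin n) => (oneLine w).leadingMaxRun) =
      {k | k ≤ n ∧ k + 1 ≠ n} := by
  ext k
  constructor
  · rintro ⟨w, rfl⟩
    have hle := (oneLine w).leadingMaxRun_le_length
    have hne := (oneLine w).leadingMaxRun_add_one_ne_length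
    rw [length_oneLine] at hle hne
    exact ⟨hle, hne⟩
  · rintro ⟨hkn, hk⟩
    set top := ((List.range k).map (n - k + ·)).reverse
    have hperm : (top ++ List.range (n - k)).Perm (List.range n) := by
      rw [show n = n - k + k by omega, List.range_add, Nat.add_sub_cancel]
      exact List.perm_append_comm.trans (List.Perm.append_left _ (List.reverse_perm _))
    obtain ⟨w, hw⟩ := exists_oneLine_eq hperm
    refine ⟨w, ?_⟩
    simp only [hw]
    rw [List.leadingMaxRun_append, List.leadingMaxRun_range (by omega)]
    · simp [top]
    · simpa [top, List.pairwise_reverse, List.pairwise_map] using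
        List.pairwise_lt_range.imp le_of_lt
    · simp [top]
      omega

/-- for `n ≥ 3`, the number of classes of `S_n` under the
`{123, 132, 213, 231}`-equivalence is `n`. -/
theorem stmt18 (n : ℕ) (hn : 3 ≤ n) :
    classCount n {({p123, p132, p213, p231} : Set Pat)} = n := by
  have hker : Setoid.mk (PattEquiv (n := n) {nonMaxFirstPats}) (Relation.EqvGen.is_equivalence _)
      = Setoid.ker fun w => (oneLine w).leadingMaxRun :=
    Setoid.ext fun _ _ => pattEquiv_iff_leadingMaxRun_eq
  have hcard : {k | k ≤ n ∧ k + 1 ≠ n} = ↑((Finset.range (n + 1)).erase (n - 1)) := by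
    ext k
    simp only [Set.mem_ofPred_eq, Finset.coe_erase, Finset.coe_range, Set.mem_sdiff,
      Set.mem_Iio, Set.mem_singleton_iff]
    omega
  rw [classCount, show ({p123, p132, p213, p231} : Set Pat) = nonMaxFirstPats from rfl, hker,
    Nat.card_congr (Setoid.quotientKerEquivRange _), range_leadingMaxRun_oneLine, hcard,
    Nat.card_coe_set_eq, Set.ncard_coe_finset, Finset.card_erase_of_mem (by simp),
    Finset.card_range, Nat.add_sub_cancel]
end
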